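/- arXiv:1211.1648 — 7 statements merged into one kernel-verified Lean document; each statement's English description precedes it below -/
import Mathlib

section
/- If the space Syz_{(0,1)} of bidegree (0,1) syzygies on p_0,…,p_3 is nonzero, then there exists a nonzero bihomogeneous polynomial p of bidegree (2,0) such that both p·u and p·v lie in U (so that I_U = ⟨pu, pv, p_2', p_3'⟩ for suitable p_2', p_3' ∈ U). -/
open MvPolynomial

noncomputable section

def biDeg (k : Type*) [CommRing k] (m n : ℕ) : Submodule k (MvPolynomial (Fin 4) k) where
  carrier := {p | ∀ d ∈ p.support, d 0 + d 1 = m ∧ d 2 + d 3 = n}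
  zero_mem' := by simp
  add_mem' := by
    intro p q hp hq d hd
    rcases Finset.mem_union.mp (MvPolynomial.support_add hd) with h | h
    · exact hp d h
    · exact hq d h
  smul_mem' := by
    intro c p hp d hd
    exact hp d (MvPolynomial.support_smul hd)

def syzMap {k : Type*} [CommRing k] (p : Fin 4 → MvPolynomial (Fin 4) k) :
    (Fin 4 → MvPolynomial (Fin 4) k) →ₗ[k] MvPolynomial (Fin 4) k where
  toFun ℓ := ∑ i, ℓ i * p i
  map_add' ℓ ℓ' := by simp [add_mul, Finset.sum_add_distrib]
  map_smul' c ℓ := by simp [smul_mul_assoc, Finset.smul_sum]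

def Syz {k : Type*} [CommRing k] (p : Fin 4 → MvPolynomial (Fin 4) k) (a b : ℕ) :
    Submodule k (Fin 4 → MvPolynomial (Fin 4) k) :=
  (Submodule.pi Set.univ fun _ => biDeg k a b) ⊓ LinearMap.ker (syzMap p)

/-! A nonzero syzygy `(aᵢ u + bᵢ v)ᵢ` of bidegree `(0,1)` gives `A u + B v = 0` with
`A = ∑ aᵢ pᵢ` and `B = ∑ bᵢ pᵢ` in `U`, not both zero since the `pᵢ` are independent. As `v` is
prime and does not divide `u`, `A = q v` and `B = -q u`, and `q` has bidegree `(2,0)`. The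
products `q u, q v` are independent, so two more elements of the 4-dimensional `U` complete them
to a basis of `U`, and a `k`-basis of `U` generates `I_U`. -/

open Module Submodule

section FourDimensional

variable {K V : Type*} [DivisionRing K] [AddCommGroup V] [Module K V]

theorem exists_span_insert_insert_eq_top_of_finrank_eq_four (hV : finrank K V = 4) {x y : V}
    (hxy : LinearIndependent K ![x, y]) :
    ∃ z w : V, span K {x, y, z, w} = ⊤ := by
  have : Module.Finite K V := Module.finite_of_finrank_eq_succ hV
  set S := span K (Set.range ![x, y])
  obtain ⟨W, hSW⟩ := S.exists_isCompl
  have hS : finrank K S = 2 := by simp [S, finrank_span_eq_card hxy]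
  have hW : finrank K W = 2 := by have := finrank_add_eq_of_isCompl hSW; omega
  let bW := Module.finBasisOfFinrankEq K W hW
  refine ⟨bW 0, bW 1, eq_top_iff.mpr (hSW.sup_eq_top.ge.trans (sup_le ?_ ?_))⟩
  · rw [span_le, Matrix.range_cons_cons_empty]
    exact (Set.insert_subset_insert (Set.singleton_subset_iff.mpr (by simp))).trans subset_span
  · intro v hv
    rw [← show ((∑ i, bW.repr ⟨v, hv⟩ i • bW i : W) : V) = v from
      congrArg Subtype.val (bW.sum_repr _)]
    simp only [Fin.sum_univ_two, Submodule.coe_add, Submodule.coe_smul]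
    exact add_mem (smul_mem _ _ (subset_span (by simp))) (smul_mem _ _ (subset_span (by simp)))

theorem Submodule.exists_span_insert_insert_eq_of_finrank_eq_four {U : Submodule K V}
    (hU : finrank K U = 4) {x y : V} (hx : x ∈ U) (hy : y ∈ U)
    (hxy : LinearIndependent K ![x, y]) :
    ∃ z ∈ U, ∃ w ∈ U, span K {x, y, z, w} = U := by
  have hxy' : LinearIndependent K ![(⟨x, hx⟩ : U), ⟨y, hy⟩] := by
    refine .of_comp U.subtype ?_
    convert hxy using 1
    ext i; fin_cases i <;> rfl
  obtain ⟨z, w, hzw⟩ := exists_span_insert_insert_eq_top_of_finrank_eq_four hU hxy'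
  refine ⟨z, z.2, w, w.2, ?_⟩
  have := congrArg (map U.subtype) hzw
  rwa [map_span, map_subtype_top, Set.image_insert_eq, Set.image_insert_eq, Set.image_insert_eq,
    Set.image_singleton] at this

end FourDimensional

theorem Ideal.span_eq_span_of_span_eq {K R : Type*} [Field K] [CommRing R] [Algebra K R]
    {S T : Set R} (h : Submodule.span K S = Submodule.span K T) :
    Ideal.span S = Ideal.span T := by
  rw [Ideal.span, Ideal.span, ← span_span_of_tower K R S, h, span_span_of_tower]

namespace MvPolynomial

theorem exists_eq_mul_X_of_mul_X_add_mul_X_eq_zero {σ R : Type*} [CommRing R] [IsDomain R]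
    {i j : σ} (hij : i ≠ j) {A B : MvPolynomial σ R} (h : A * X i + B * X j = 0) :
    ∃ q, A = q * X j ∧ B = -(q * X i) := by
  have hdvd : X j ∣ A * X i := ⟨-B, by linear_combination h⟩
  obtain ⟨q, rfl⟩ := ((X_prime (R := R)).dvd_or_dvd hdvd).resolve_right (by simpa using hij.symm)
  refine ⟨q, mul_comm _ _, mul_right_cancel₀ (X_ne_zero j) ?_⟩
  linear_combination h

theorem linearIndependent_mul_X_pair {σ K : Type*} [Field K] {i j : σ} (hij : i ≠ j)
    {q : MvPolynomial σ K} (hq : q ≠ 0) : LinearIndependent K ![q * X i, q * X j] := by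
  have hX := ((linearIndependent_X σ K).comp ![i, j] fun a b => by
    fin_cases a <;> fin_cases b <;> simp [hij, hij.symm])
  have hcomp : ![q * X i, q * X j] = LinearMap.mulLeft K q ∘ X ∘ ![i, j] := by
    ext a : 1; fin_cases a <;> rfl
  rw [hcomp]
  exact hX.map' _ (LinearMap.ker_eq_bot.mpr (mul_right_injective₀ hq))

end MvPolynomial

theorem eq_C_mul_X_add_C_mul_X_of_mem_biDeg_zero_one {k : Type*} [CommRing k]
    {x : MvPolynomial (Fin 4) k} (hx : x ∈ biDeg k 0 1) :
    ∃ a b : k, x = C a * X 2 + C b * X 3 := by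
  have hne : Finsupp.single (2 : Fin 4) 1 ≠ Finsupp.single 3 1 :=
    (Finsupp.single_left_injective one_ne_zero).ne (by decide)
  have hsupp : x.support ⊆ {Finsupp.single 2 1, Finsupp.single 3 1} := by
    intro d hd
    obtain ⟨h01, h23⟩ := hx d hd
    simp only [Finset.mem_insert, Finset.mem_singleton]
    rcases (by omega : d 2 = 1 ∧ d 3 = 0 ∨ d 2 = 0 ∧ d 3 = 1) with ⟨h2, h3⟩ | ⟨h2, h3⟩
    exacts [.inl (by ext j; fin_cases j <;> simp <;> omega),
      .inr (by ext j; fin_cases j <;> simp <;> omega)]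
  refine ⟨coeff (Finsupp.single 2 1) x, coeff (Finsupp.single 3 1) x, ?_⟩
  conv_lhs =>
    rw [x.as_sum, Finset.sum_subset hsupp fun d _ hd => by simp [notMem_support_iff.mp hd]]
  rw [Finset.sum_pair hne, C_mul_X_eq_monomial, C_mul_X_eq_monomial]

theorem mem_biDeg_of_mul_X_three_mem {k : Type*} [CommRing k] {m n : ℕ}
    {q : MvPolynomial (Fin 4) k} (h : q * X 3 ∈ biDeg k m (n + 1)) : q ∈ biDeg k m n := by
  intro d hd
  have := h (d + Finsupp.single 3 1) (by rw [support_mul_X]; exact Finset.mem_map_of_mem _ hd)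
  simp at this
  omega

theorem exists_mul_X_add_mul_X_eq_zero_of_syz_ne_bot {k : Type*} [Field k]
    {p : Fin 4 → MvPolynomial (Fin 4) k} (hli : LinearIndependent k p) (hsyz : Syz p 0 1 ≠ ⊥) :
    ∃ A ∈ span k (Set.range p), ∃ B ∈ span k (Set.range p),
      (A ≠ 0 ∨ B ≠ 0) ∧ A * X 2 + B * X 3 = 0 := by
  obtain ⟨ℓ, ⟨hℓdeg, hℓker⟩, hℓ0⟩ := (Submodule.ne_bot_iff _).mp hsyz
  choose a b hab using fun i => eq_C_mul_X_add_C_mul_X_of_mem_biDeg_zero_one (hℓdeg i trivial)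
  let L := Fintype.linearCombination k p
  have hL : ∀ c, L c ∈ span k (Set.range p) := fun c =>
    Fintype.range_linearCombination k p ▸ LinearMap.mem_range_self L c
  refine ⟨L a, hL a, L b, hL b, ?_, ?_⟩
  · have hinj := linearIndependent_iff_injective_fintypeLinearCombination.mp hli
    by_contra! h
    obtain ⟨rfl, rfl⟩ : a = 0 ∧ b = 0 :=
      ⟨hinj (h.1.trans L.map_zero.symm), hinj (h.2.trans L.map_zero.symm)⟩
    exact hℓ0 (funext fun i => by simp [hab i])
  · rw [← LinearMap.mem_ker.mp hℓker]
    simp only [L, Fintype.linearCombination_apply, smul_eq_C_mul, Finset.sum_mul,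
      ← Finset.sum_add_distrib, syzMap, LinearMap.coe_mk, AddHom.coe_mk, hab]
    exact Finset.sum_congr rfl fun i _ => by ring

theorem statement0_general {k : Type*} [Field k]
    (p : Fin 4 → MvPolynomial (Fin 4) k)
    (hli : LinearIndependent k p)
    (hdeg : ∀ i, p i ∈ biDeg k 2 1)
    (hsyz : Syz p 0 1 ≠ ⊥) :
    ∃ q : MvPolynomial (Fin 4) k, q ≠ 0 ∧ q ∈ biDeg k 2 0 ∧
      q * X 2 ∈ Submodule.span k (Set.range p) ∧
      q * X 3 ∈ Submodule.span k (Set.range p) ∧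
      ∃ p₂ p₃ : MvPolynomial (Fin 4) k,
        p₂ ∈ Submodule.span k (Set.range p) ∧ p₃ ∈ Submodule.span k (Set.range p) ∧
        Ideal.span {q * X 2, q * X 3, p₂, p₃} = Ideal.span (Set.range p) := by
  obtain ⟨A, hA, B, hB, hAB0, hAB⟩ := exists_mul_X_add_mul_X_eq_zero_of_syz_ne_bot hli hsyz
  obtain ⟨q, rfl, rfl⟩ :=
    exists_eq_mul_X_of_mul_X_add_mul_X_eq_zero (by decide : (2 : Fin 4) ≠ 3) hAB
  have hq : q ≠ 0 := by rintro rfl; simp at hAB0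
  have hU : span k (Set.range p) ≤ biDeg k 2 1 := span_le.mpr (Set.range_subset_iff.mpr hdeg)
  have hqX2 : q * X 2 ∈ span k (Set.range p) := neg_mem_iff.mp hB
  obtain ⟨p₂, hp₂, p₃, hp₃, hspan⟩ :=
    (span k (Set.range p)).exists_span_insert_insert_eq_of_finrank_eq_four
      (by simpa using finrank_span_eq_card hli) hqX2 hA
      (linearIndependent_mul_X_pair (by decide) hq)
  exact ⟨q, hq, mem_biDeg_of_mul_X_three_mem (hU hA), hqX2, hA, p₂, p₃, hp₂, hp₃,
    Ideal.span_eq_span_of_span_eq hspan⟩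

/-- If Syz_{(0,1)} on p_0,…,p_3 is nonzero, then there is a nonzero
bihomogeneous p of bidegree (2,0) with p·u, p·v ∈ U, so that
I_U = ⟨pu, pv, p₂', p₃'⟩ for suitable p₂', p₃' ∈ U. -/
theorem statement0 {k : Type*} [Field k] [IsAlgClosed k]
    (p : Fin 4 → MvPolynomial (Fin 4) k)
    (hli : LinearIndependent k p)
    (hdeg : ∀ i, p i ∈ biDeg k 2 1)
    (hsyz : Syz p 0 1 ≠ ⊥) :
    ∃ q : MvPolynomial (Fin 4) k, q ≠ 0 ∧ q ∈ biDeg k 2 0 ∧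
      q * X 2 ∈ Submodule.span k (Set.range p) ∧
      q * X 3 ∈ Submodule.span k (Set.range p) ∧
      ∃ p₂ p₃ : MvPolynomial (Fin 4) k,
        p₂ ∈ Submodule.span k (Set.range p) ∧ p₃ ∈ Submodule.span k (Set.range p) ∧
        Ideal.span {q * X 2, q * X 3, p₂, p₃} = Ideal.span (Set.range p) :=
  statement0_general p hli hdeg hsyz
end
end

section
/- If the space Syz_{(1,0)} of bidegree (1,0) syzygies on p_0,…,p_3 is nonzero, then there exists a nonzero bihomogeneous polynomial p of bidegree (1,1) such that both p·s and p·t lie in U (so that I_U = ⟨ps, pt, p_2', p_3'⟩ for suitable p_2', p_3' ∈ U). -/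
open MvPolynomial

noncomputable section

/-!
A nonzero syzygy of bidegree (1,0) has entries `aᵢ s + bᵢ t`, so `A = ∑ aᵢ pᵢ` and `B = ∑ bᵢ pᵢ`
lie in `U`, are not both zero by linear independence, and satisfy `s A + t B = 0`. Since `s` and
`t` are coprime, `A = t q` and `B = -s q` with `q ≠ 0` of bidegree (1,1). The elements `q s`, `q t`
are linearly independent in the 4-dimensional space `U`, so they extend to a basis
`q s, q t, p₂, p₃` of `U`, and an ideal generated by a set only depends on the `k`-span of the set.
-/

open Submodule

theorem LinearIndependent.exists_span_insert_insert_eq {K V : Type*} [Field K] [AddCommGroup V]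
    [Module K V] {U : Submodule K V} (hU : Module.finrank K U = 4) {x y : V} (hx : x ∈ U)
    (hy : y ∈ U) (hxy : LinearIndependent K ![x, y]) :
    ∃ z w, z ∈ U ∧ w ∈ U ∧ span K {x, y, z, w} = U := by
  have hne : x ≠ y := by simpa using hxy.injective.ne (by decide : (0 : Fin 2) ≠ 1)
  have hxy' : LinearIndepOn K id {x, y} := by
    rw [Set.pair_comm]
    simpa [Matrix.range_cons_cons_empty] using (linearIndepOn_id_range_iff hxy.injective).mpr hxy
  obtain ⟨c, hcU, hxyc, hUc, hc⟩ :=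
    exists_linearIndepOn_id_extension hxy' (Set.insert_subset hx (Set.singleton_subset_iff.mpr hy))
  have hspan : span K c = U := le_antisymm (span_le.mpr hcU) (by simpa using hUc)
  have : Module.Finite K U := Module.finite_of_finrank_pos (by omega)
  have hc4 : c.encard = 4 := by
    have := toENat_rank_span_set hc
    rwa [Set.image_id, hspan, ← Module.finrank_eq_rank, hU, Nat.cast_ofNat,
      Cardinal.toENat_ofNat, eq_comm] at this
  have hdiff : (c \ {x, y}).encard = 2 := by
    rw [Set.encard_sdiff hxyc (Set.toFinite _), hc4, Set.encard_pair hne]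
    rfl
  obtain ⟨z, w, -, hzw⟩ := Set.encard_eq_two.mp hdiff
  have hc_eq : c = {x, y, z, w} := by
    rw [← Set.union_sdiff_cancel hxyc, hzw, Set.insert_union, Set.singleton_union]
  refine ⟨z, w, hcU (by simp [hc_eq]), hcU (by simp [hc_eq]), hc_eq ▸ hspan⟩

theorem MvPolynomial.exists_eq_X_mul_of_X_mul_add_X_mul_eq_zero {σ R : Type*} [CommRing R]
    [IsDomain R] {i j : σ} (hij : i ≠ j) {A B : MvPolynomial σ R}
    (h : X i * A + X j * B = 0) : ∃ q, A = X j * q ∧ B = -(X i * q) := by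
  have hdvd : X j ∣ X i * A := ⟨-B, by linear_combination h⟩
  obtain ⟨q, rfl⟩ := ((X_prime (R := R)).dvd_or_dvd hdvd).resolve_left (by simpa using hij.symm)
  refine ⟨q, rfl, ?_⟩
  have : X j * (B + X i * q) = 0 := by linear_combination h
  linear_combination (mul_eq_zero.mp this).resolve_left (X_ne_zero j)

theorem MvPolynomial.linearIndependent_mul_X_pair_s1 {σ K : Type*} [Field K] {q : MvPolynomial σ K}
    (hq : q ≠ 0) {i j : σ} (hij : i ≠ j) : LinearIndependent K ![q * X i, q * X j] := by
  have hij' : Function.Injective ![i, j] := by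
    simpa [Function.Injective, Fin.forall_fin_two] using ⟨hij, hij.symm⟩
  have hcomp : ![q * X i, q * X j] = LinearMap.mulLeft K q ∘ X ∘ ![i, j] := by
    ext n; fin_cases n <;> rfl
  rw [hcomp]
  exact ((linearIndependent_X σ K).comp _ hij').map' _
    (LinearMap.ker_eq_bot.mpr (mul_right_injective₀ hq))

theorem eq_single_or_eq_single_of_bidegree_one_zero {d : Fin 4 →₀ ℕ} (h₁ : d 0 + d 1 = 1)
    (h₂ : d 2 + d 3 = 0) :
    d = Finsupp.single 0 1 ∨ d = Finsupp.single 1 1 := by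
  rcases Nat.add_eq_one_iff.mp h₁ with ⟨h0, h1⟩ | ⟨h0, h1⟩
  · right; ext n; fin_cases n <;> simp [h0, h1] <;> omega
  · left; ext n; fin_cases n <;> simp [h0, h1] <;> omega

theorem eq_smul_X_add_smul_X_of_mem_biDeg_one_zero {k : Type*} [CommRing k]
    {f : MvPolynomial (Fin 4) k} (hf : f ∈ biDeg k 1 0) :
    f = coeff (Finsupp.single 0 1) f • X 0 + coeff (Finsupp.single 1 1) f • X 1 := by
  have hsupp : f.support ⊆ {Finsupp.single 0 1, Finsupp.single 1 1} := fun d hd => by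
    simpa using eq_single_or_eq_single_of_bidegree_one_zero (hf d hd).1 (hf d hd).2
  conv_lhs =>
    rw [f.as_sum, Finset.sum_subset hsupp fun d _ hd => by simp [notMem_support_iff.mp hd]]
  rw [Finset.sum_pair (by simp [Finsupp.single_eq_single_iff])]
  simp [X, smul_monomial]

theorem mem_biDeg_of_X_one_mul_mem {k : Type*} [CommRing k] {q : MvPolynomial (Fin 4) k}
    {m n : ℕ} (h : X 1 * q ∈ biDeg k (m + 1) n) : q ∈ biDeg k m n := by
  intro d hd
  have := h (Finsupp.single 1 1 + d) (by simpa [coeff_X_mul] using hd)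
  simp at this
  omega

theorem exists_X_mul_add_X_mul_eq_zero_of_syz_ne_bot {k : Type*} [Field k]
    {p : Fin 4 → MvPolynomial (Fin 4) k} (hli : LinearIndependent k p) (hsyz : Syz p 1 0 ≠ ⊥) :
    ∃ A ∈ span k (Set.range p), ∃ B ∈ span k (Set.range p),
      (A ≠ 0 ∨ B ≠ 0) ∧ X 0 * A + X 1 * B = 0 := by
  obtain ⟨ℓ, hℓ, hℓ0⟩ := Submodule.exists_mem_ne_zero_of_ne_bot hsyz
  obtain ⟨hℓdeg, hℓker⟩ := Submodule.mem_inf.mp hℓ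
  set a : Fin 4 → k := fun i => coeff (Finsupp.single 0 1) (ℓ i)
  set b : Fin 4 → k := fun i => coeff (Finsupp.single 1 1) (ℓ i)
  have hℓ_eq (i : Fin 4) : ℓ i = a i • X 0 + b i • X 1 :=
    eq_smul_X_add_smul_X_of_mem_biDeg_one_zero (Submodule.mem_pi.mp hℓdeg i (Set.mem_univ i))
  have hmem (c : Fin 4 → k) : ∑ i, c i • p i ∈ span k (Set.range p) :=
    sum_mem fun i _ => smul_mem _ _ (subset_span (Set.mem_range_self i))
  refine ⟨_, hmem a, _, hmem b, ?_, ?_⟩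
  · by_contra! h
    have ha := Fintype.linearIndependent_iff.mp hli a h.1
    have hb := Fintype.linearIndependent_iff.mp hli b h.2
    exact hℓ0 (funext fun i => by simp [hℓ_eq i, ha i, hb i])
  · rw [← LinearMap.mem_ker.mp hℓker, syzMap, LinearMap.coe_mk, AddHom.coe_mk, Finset.mul_sum,
      Finset.mul_sum, ← Finset.sum_add_distrib]
    refine Finset.sum_congr rfl fun i _ => ?_
    rw [hℓ_eq i]
    simp only [mul_smul_comm, add_mul, smul_mul_assoc]

theorem statement1_general {k : Type*} [Field k]
    (p : Fin 4 → MvPolynomial (Fin 4) k)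
    (hli : LinearIndependent k p)
    (hdeg : ∀ i, p i ∈ biDeg k 2 1)
    (hsyz : Syz p 1 0 ≠ ⊥) :
    ∃ q : MvPolynomial (Fin 4) k, q ≠ 0 ∧ q ∈ biDeg k 1 1 ∧
      q * X 0 ∈ Submodule.span k (Set.range p) ∧
      q * X 1 ∈ Submodule.span k (Set.range p) ∧
      ∃ p₂ p₃ : MvPolynomial (Fin 4) k,
        p₂ ∈ Submodule.span k (Set.range p) ∧ p₃ ∈ Submodule.span k (Set.range p) ∧
        Ideal.span {q * X 0, q * X 1, p₂, p₃} = Ideal.span (Set.range p) := by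
  obtain ⟨_, hA, _, hB, hne, hAB⟩ := exists_X_mul_add_X_mul_eq_zero_of_syz_ne_bot hli hsyz
  obtain ⟨q, rfl, rfl⟩ := exists_eq_X_mul_of_X_mul_add_X_mul_eq_zero (by decide) hAB
  have hq : q ≠ 0 := by rintro rfl; simp at hne
  have hqX0 : q * X 0 ∈ span k (Set.range p) := by simpa [mul_comm] using neg_mem hB
  have hqX1 : q * X 1 ∈ span k (Set.range p) := by rwa [mul_comm]
  have hU : Module.finrank k (span k (Set.range p)) = 4 := by simp [finrank_span_eq_card hli]
  have hqX : LinearIndependent k ![q * X 0, q * X 1] := linearIndependent_mul_X_pair_s1 hq (by decide)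
  obtain ⟨p₂, p₃, hp₂, hp₃, hspan⟩ := hqX.exists_span_insert_insert_eq hU hqX0 hqX1
  have hUdeg : span k (Set.range p) ≤ biDeg k 2 1 := span_le.mpr (Set.range_subset_iff.mpr hdeg)
  refine ⟨q, hq, mem_biDeg_of_X_one_mul_mem (hUdeg hA), hqX0, hqX1, p₂, p₃, hp₂, hp₃, ?_⟩
  rw [Ideal.span, Ideal.span, ← span_span_of_tower k, hspan, span_span_of_tower]

/-- If Syz_{(1,0)} on p_0,…,p_3 is nonzero, then there is a nonzero
bihomogeneous p of bidegree (1,1) with p·s, p·t ∈ U, so that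
I_U = ⟨ps, pt, p₂', p₃'⟩ for suitable p₂', p₃' ∈ U. -/
theorem statement1 {k : Type*} [Field k] [IsAlgClosed k]
    (p : Fin 4 → MvPolynomial (Fin 4) k)
    (hli : LinearIndependent k p)
    (hdeg : ∀ i, p i ∈ biDeg k 2 1)
    (hsyz : Syz p 1 0 ≠ ⊥) :
    ∃ q : MvPolynomial (Fin 4) k, q ≠ 0 ∧ q ∈ biDeg k 1 1 ∧
      q * X 0 ∈ Submodule.span k (Set.range p) ∧
      q * X 1 ∈ Submodule.span k (Set.range p) ∧
      ∃ p₂ p₃ : MvPolynomial (Fin 4) k,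
        p₂ ∈ Submodule.span k (Set.range p) ∧ p₃ ∈ Submodule.span k (Set.range p) ∧
        Ideal.span {q * X 0, q * X 1, p₂, p₃} = Ideal.span (Set.range p) :=
  statement1_general p hli hdeg hsyz

end
end

section
/- If U is basepoint free, then the spaces Syz_{(0,1)} and Syz_{(1,0)} cannot both be nonzero; that is, I_U cannot have first syzygies of both bidegree (0,1) and bidegree (1,0). -/
open MvPolynomial

noncomputable section

/-!
Write `s, t, u, v` for `X 0, X 1, X 2, X 3` and `U` for the span of the `p i`.
A `(0,1)`-syzygy gives `q, q' ∈ U` with `u q + v q' = 0`, hence `q = v w`, `q' = -u w` for a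
nonzero binary quadric `w(s, t)`, which splits as `w = L₁ L₂` since `k` is algebraically closed.
Over a root `x` of `w`, basepoint freeness makes restriction to the fibre `{x} × ℙ¹` map the
four-dimensional `U` onto the two-dimensional space of linear forms in `u, v`, so its kernel is
exactly `w · ⟨u, v⟩`. A `(1,0)`-syzygy gives `f, g ∈ U` with `s f + t g = 0`. On the fibre over the
root `(b : -a)` of `L₁ = a s + b t` the element `b f - a g` vanishes, so it lies in `w · ⟨u, v⟩`;
cancelling `L₁` shows that `L₂` divides `f` and `g`. Then `f` and `g` vanish on the fibre over the
root of `L₂`, so they lie in `w · ⟨u, v⟩` too, where `s f + t g = 0` forces `f = g = 0`.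
-/

namespace BidegreeTwoOne

variable {k : Type*} [Field k]

open Module Submodule

lemma eq_sum_single_fin_four (d : Fin 4 →₀ ℕ) :
    d = Finsupp.single 0 (d 0) + Finsupp.single 1 (d 1) + Finsupp.single 2 (d 2)
      + Finsupp.single 3 (d 3) := by
  ext i; fin_cases i <;> simp

lemma biDeg_le_span_monomial {m n : ℕ} {S : Set (Fin 4 →₀ ℕ)}
    (hS : ∀ d : Fin 4 →₀ ℕ, d 0 + d 1 = m → d 2 + d 3 = n → d ∈ S) :
    biDeg k m n ≤ span k ((monomial · 1) '' S) := by
  intro f hf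
  rw [← restrictSupport_eq_span]
  exact fun d hd => hS d (hf d hd).1 (hf d hd).2

lemma biDeg_zero_one_le : biDeg k 0 1 ≤ span k {X 2, X 3} := by
  convert biDeg_le_span_monomial (S := {Finsupp.single 2 1, Finsupp.single 3 1}) _ using 2
  · simp [Set.image_pair, X]
  · intro d h01 h23
    rw [eq_sum_single_fin_four d]
    rcases (by omega : d 2 = 1 ∧ d 3 = 0 ∨ d 2 = 0 ∧ d 3 = 1) with h | h <;> simp_all

lemma biDeg_one_zero_le : biDeg k 1 0 ≤ span k {X 0, X 1} := by
  convert biDeg_le_span_monomial (S := {Finsupp.single 0 1, Finsupp.single 1 1}) _ using 2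
  · simp [Set.image_pair, X]
  · intro d h01 h23
    rw [eq_sum_single_fin_four d]
    rcases (by omega : d 0 = 1 ∧ d 1 = 0 ∨ d 0 = 0 ∧ d 1 = 1) with h | h <;> simp_all

lemma biDeg_two_zero_le :
    biDeg k 2 0 ≤ span k {X 0 ^ 2, X 0 * X 1, X 1 ^ 2} := by
  convert biDeg_le_span_monomial
    (S := {Finsupp.single 0 2, Finsupp.single 0 1 + Finsupp.single 1 1, Finsupp.single 1 2}) _
    using 2
  · rw [X_pow_eq_monomial, X_pow_eq_monomial, X, X, monomial_mul, one_mul]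
    simp [Set.image_insert_eq]
  · intro d h01 h23
    rw [eq_sum_single_fin_four d]
    rcases (by omega : d 0 = 2 ∧ d 1 = 0 ∨ d 0 = 1 ∧ d 1 = 1 ∨ d 0 = 0 ∧ d 1 = 2) with
      h | h | h <;> simp_all

lemma exists_root_quadratic [IsAlgClosed k] {a b c : k} (ha : a ≠ 0) :
    ∃ r, a * r ^ 2 + b * r + c = 0 := by
  obtain ⟨r, hr⟩ := IsAlgClosed.exists_root
    (Polynomial.C a * Polynomial.X ^ 2 + Polynomial.C b * Polynomial.X + Polynomial.C c)
    (by rw [Polynomial.degree_quadratic ha]; decide)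
  exact ⟨r, by simpa using hr⟩

lemma exists_eq_mul_of_mem_biDeg_two_zero [IsAlgClosed k] {w : MvPolynomial (Fin 4) k}
    (hw : w ∈ biDeg k 2 0) :
    ∃ a b c d : k, w = (C a * X 0 + C b * X 1) * (C c * X 0 + C d * X 1) := by
  obtain ⟨α, z, hz, rfl⟩ := mem_span_insert.1 (biDeg_two_zero_le hw)
  obtain ⟨β, γ, rfl⟩ := mem_span_pair.1 hz
  simp only [smul_eq_C_mul]
  by_cases hα : α = 0
  · exact ⟨0, 1, β, γ, by rw [hα]; simp only [map_zero, map_one]; ring⟩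
  · obtain ⟨r, hr⟩ := exists_root_quadratic (b := β) (c := γ) hα
    refine ⟨1, -r, α, β + α * r, ?_⟩
    have hr' := congrArg (C : k → MvPolynomial (Fin 4) k) hr
    simp only [map_add, map_mul, map_pow, map_zero] at hr'
    simp only [map_one, map_neg, map_add, map_mul]
    linear_combination X 1 ^ 2 * hr'

lemma exists_of_X_mul_add_X_mul_eq_zero {σ R : Type*} [CommRing R] [IsDomain R] {i j : σ}
    (hij : i ≠ j) {f g : MvPolynomial σ R} (h : X i * f + X j * g = 0) :
    ∃ r, f = X j * r ∧ g = -(X i * r) := by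
  have hdvd : X i ∣ X j * g := ⟨-f, by linear_combination h⟩
  obtain ⟨r, rfl⟩ := ((X_prime (R := R)).dvd_or_dvd hdvd).resolve_left
    (fun h' => hij (X_dvd_X.1 h'))
  exact ⟨-r, mul_left_cancel₀ (X_ne_zero i) (by linear_combination h), by ring⟩

lemma mem_biDeg_of_X_three_mul_mem {m n : ℕ} {r : MvPolynomial (Fin 4) k}
    (h : X 3 * r ∈ biDeg k m (n + 1)) : r ∈ biDeg k m n := by
  intro d hd
  have := h (Finsupp.single 3 1 + d) (by
    rw [support_X_mul]; exact Finset.mem_map_of_mem _ hd)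
  simp only [Finsupp.coe_add, Pi.add_apply, ne_eq, Fin.reduceEq, not_false_eq_true,
    Finsupp.single_eq_of_ne, zero_add, Finsupp.single_eq_same] at this
  omega

lemma exists_pair_of_mem_Syz {p : Fin 4 → MvPolynomial (Fin 4) k} (hli : LinearIndependent k p)
    {a b : ℕ} {i j : Fin 4} (hspan : biDeg k a b ≤ span k {X i, X j})
    {ℓ : Fin 4 → MvPolynomial (Fin 4) k} (hℓ : ℓ ∈ Syz p a b) (hℓ0 : ℓ ≠ 0) :
    ∃ f ∈ span k (Set.range p), ∃ g ∈ span k (Set.range p),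
      (f ≠ 0 ∨ g ≠ 0) ∧ X i * f + X j * g = 0 := by
  obtain ⟨hdeg, hsyz⟩ := mem_inf.1 hℓ
  choose α β hαβ using fun n => mem_span_pair.1 (hspan (mem_pi.1 hdeg n trivial))
  refine ⟨∑ n, α n • p n, sum_mem fun n _ => smul_mem _ _ (subset_span ⟨n, rfl⟩),
    ∑ n, β n • p n, sum_mem fun n _ => smul_mem _ _ (subset_span ⟨n, rfl⟩), ?_, ?_⟩
  · by_contra! h0
    have hα := Fintype.linearIndependent_iff.1 hli α h0.1
    have hβ := Fintype.linearIndependent_iff.1 hli β h0.2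
    exact hℓ0 (funext fun n => by simp [← hαβ n, hα n, hβ n])
  · rw [← LinearMap.mem_ker.1 hsyz, syzMap, LinearMap.coe_mk, AddHom.coe_mk, Finset.mul_sum,
      Finset.mul_sum, ← Finset.sum_add_distrib]
    refine Finset.sum_congr rfl fun n _ => ?_
    rw [← hαβ n, smul_eq_C_mul, smul_eq_C_mul, smul_eq_C_mul, smul_eq_C_mul]
    ring

def IsBasepointFree (U : Submodule k (MvPolynomial (Fin 4) k)) : Prop :=
  ∀ s t u v : k, (s ≠ 0 ∨ t ≠ 0) → (u ≠ 0 ∨ v ≠ 0) →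
    ∃ P ∈ U, eval ![s, t, u, v] P ≠ 0

lemma isBasepointFree_span_of_radical_eq {p : Fin 4 → MvPolynomial (Fin 4) k}
    (hbpf : (Ideal.span (Set.range p)).radical =
      Ideal.span {X 0, X 1} ⊓ Ideal.span {X 2, X 3}) :
    IsBasepointFree (span k (Set.range p)) := by
  intro s t u v hst huv
  by_contra! h
  have hle : (Ideal.span (Set.range p)).radical ≤ RingHom.ker (eval ![s, t, u, v]) :=
    (RingHom.ker_isPrime _).radical_le_iff.2 <| Ideal.span_le.2 <| Set.range_subset_iff.2
      fun n => h _ (subset_span ⟨n, rfl⟩)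
  have hvanish : ∀ {x y : MvPolynomial (Fin 4) k}, x ∈ ({X 0, X 1} : Set _) →
      y ∈ ({X 2, X 3} : Set _) → eval ![s, t, u, v] x * eval ![s, t, u, v] y = 0 :=
    fun {x y} hx hy => by
      have hxy : x * y ∈ (Ideal.span (Set.range p)).radical := hbpf ▸
        ⟨Ideal.mul_mem_right _ _ (Ideal.subset_span hx),
          Ideal.mul_mem_left _ _ (Ideal.subset_span hy)⟩
      simpa using hle hxy
  rcases hst with hs | ht <;> rcases huv with hu | hv
  · exact mul_ne_zero hs hu (by simpa using hvanish (x := X 0) (y := X 2) (by simp) (by simp))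
  · exact mul_ne_zero hs hv (by simpa using hvanish (x := X 0) (y := X 3) (by simp) (by simp))
  · exact mul_ne_zero ht hu (by simpa using hvanish (x := X 1) (y := X 2) (by simp) (by simp))
  · exact mul_ne_zero ht hv (by simpa using hvanish (x := X 1) (y := X 3) (by simp) (by simp))

lemma eval_eq_of_mem_biDeg_one {m : ℕ} {P : MvPolynomial (Fin 4) k} (hP : P ∈ biDeg k m 1)
    (s t u v : k) :
    eval ![s, t, u, v] P = u * eval ![s, t, 1, 0] P + v * eval ![s, t, 0, 1] P := by
  simp only [eval_eq', Finset.mul_sum, ← Finset.sum_add_distrib]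
  refine Finset.sum_congr rfl fun d hd => ?_
  have h23 := (hP d hd).2
  rcases (by omega : d 2 = 1 ∧ d 3 = 0 ∨ d 2 = 0 ∧ d 3 = 1) with h | h <;>
    simp only [Fin.prod_univ_four, Matrix.cons_val_zero, Matrix.cons_val_one, Matrix.cons_val, h,
      pow_one, pow_zero, mul_one, mul_zero, add_zero, zero_add] <;> ring

/-- Restriction to the fibre `{(s : t)} × ℙ¹`, recorded by its values at `(1 : 0)` and
`(0 : 1)`. -/
def fiberEval (s t : k) : MvPolynomial (Fin 4) k →ₗ[k] k × k :=
  (aeval ![s, t, 1, 0]).toLinearMap.prod (aeval ![s, t, 0, 1]).toLinearMap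

lemma map_fiberEval_eq_top {m : ℕ} {U : Submodule k (MvPolynomial (Fin 4) k)}
    (hU : U ≤ biDeg k m 1) (hfree : IsBasepointFree U) {s t : k} (hst : s ≠ 0 ∨ t ≠ 0) :
    U.map (fiberEval s t) = ⊤ := by
  by_contra hne
  obtain ⟨φ, hφ0, hφ⟩ := exists_le_ker_of_lt_top _ (lt_top_iff_ne_top.2 hne)
  have hφapply : ∀ x y : k, φ (x, y) = x * φ (1, 0) + y * φ (0, 1) := fun x y => by
    have hxy : ((x, y) : k × k) = x • (1, 0) + y • (0, 1) := by ext <;> simp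
    rw [hxy, map_add, map_smul, map_smul, smul_eq_mul, smul_eq_mul]
  have huv : φ (1, 0) ≠ 0 ∨ φ (0, 1) ≠ 0 := by
    by_contra! h
    exact hφ0 (LinearMap.ext fun ⟨x, y⟩ => by
      rw [hφapply, h.1, h.2, LinearMap.zero_apply]; ring)
  obtain ⟨P, hPU, hP⟩ := hfree s t _ _ hst huv
  refine hP ?_
  have := hφ (mem_map_of_mem hPU)
  rw [LinearMap.mem_ker, fiberEval, LinearMap.prod_apply, hφapply] at this
  simp only [Function.prod, AlgHom.toLinearMap_apply, aeval_eq_eval] at this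
  rw [eval_eq_of_mem_biDeg_one (hU hPU)]
  linear_combination this

lemma inf_ker_eq_of_finrank_le {K V W : Type*} [Field K] [AddCommGroup V] [Module K V]
    [AddCommGroup W] [Module K W] (E : V →ₗ[K] W) {U S : Submodule K V} [FiniteDimensional K U]
    (hSU : S ≤ U ⊓ LinearMap.ker E)
    (hrank : finrank K U ≤ finrank K S + finrank K (U.map E)) :
    U ⊓ LinearMap.ker E = S := by
  have hnull := (E.domRestrict U).finrank_range_add_finrank_ker
  rw [LinearMap.range_domRestrict, LinearMap.ker_domRestrict, ← finrank_map_subtype_eq,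
    map_comap_subtype] at hnull
  exact (eq_of_le_of_finrank_le hSU (by omega)).symm

lemma mem_span_X_mul_of_eval_eq_zero {m : ℕ} {U : Submodule k (MvPolynomial (Fin 4) k)}
    [FiniteDimensional k U] (hU : U ≤ biDeg k m 1) (hU4 : finrank k U ≤ 4)
    (hfree : IsBasepointFree U) {w : MvPolynomial (Fin 4) k} (hw : w ≠ 0)
    (h2 : X 2 * w ∈ U) (h3 : X 3 * w ∈ U) {s t : k} (hst : s ≠ 0 ∨ t ≠ 0)
    (hroot : ∀ u v, eval ![s, t, u, v] w = 0) {P : MvPolynomial (Fin 4) k} (hP : P ∈ U)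
    (hP0 : ∀ u v, eval ![s, t, u, v] P = 0) : P ∈ span k {X 2 * w, X 3 * w} := by
  have hind : LinearIndependent k ![X 2 * w, X 3 * w] := by
    refine LinearIndependent.pair_iff.2 fun a b hab => ?_
    have hlin : C a * X 2 + C b * X 3 = (0 : MvPolynomial (Fin 4) k) := by
      refine (mul_eq_zero.1 ?_).resolve_right hw
      rw [← hab, smul_eq_C_mul, smul_eq_C_mul]; ring
    exact ⟨by simpa using congrArg (eval ![0, 0, 1, 0]) hlin,
      by simpa using congrArg (eval ![0, 0, 0, 1]) hlin⟩
  have hfiber : ∀ {Q}, (∀ u v, eval ![s, t, u, v] Q = 0) → fiberEval s t Q = 0 := fun hQ => by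
    simp [fiberEval, aeval_eq_eval, hQ]
  have hspan : span k {X 2 * w, X 3 * w} ≤ U ⊓ LinearMap.ker (fiberEval s t) := by
    rw [span_le, Set.insert_subset_iff, Set.singleton_subset_iff]
    exact ⟨⟨h2, hfiber fun u v => by simp [hroot]⟩,
      ⟨h3, hfiber fun u v => by simp [hroot]⟩⟩
  have hrank : finrank k U ≤ finrank k (span k {X 2 * w, X 3 * w}) +
      finrank k (U.map (fiberEval s t)) := by
    rw [map_fiberEval_eq_top hU hfree hst, finrank_top, finrank_prod, finrank_self,
      ← Matrix.range_cons_cons_empty, finrank_span_eq_card hind]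
    simpa using hU4
  rw [← inf_ker_eq_of_finrank_le _ hspan hrank]
  exact ⟨hP, hfiber hP0⟩

lemma eq_zero_of_mem_span_X_mul {w f g : MvPolynomial (Fin 4) k} (hw : w ≠ 0)
    (hf : f ∈ span k {X 2 * w, X 3 * w}) (hg : g ∈ span k {X 2 * w, X 3 * w})
    (hfg : X 0 * f + X 1 * g = 0) : f = 0 ∧ g = 0 := by
  obtain ⟨a, b, rfl⟩ := mem_span_pair.1 hf
  obtain ⟨c, d, rfl⟩ := mem_span_pair.1 hg
  simp only [smul_eq_C_mul] at hfg ⊢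
  have hcoeff : C a * X 0 * X 2 + C b * X 0 * X 3 + C c * X 1 * X 2 + C d * X 1 * X 3 =
      (0 : MvPolynomial (Fin 4) k) := by
    refine (mul_eq_zero.1 (?_ : _ * w = 0)).resolve_right hw
    linear_combination hfg
  have ha : a = 0 := by simpa using congrArg (eval (![1, 0, 1, 0] : Fin 4 → k)) hcoeff
  have hb : b = 0 := by simpa using congrArg (eval (![1, 0, 0, 1] : Fin 4 → k)) hcoeff
  have hc : c = 0 := by simpa using congrArg (eval (![0, 1, 1, 0] : Fin 4 → k)) hcoeff
  have hd : d = 0 := by simpa using congrArg (eval (![0, 1, 0, 1] : Fin 4 → k)) hcoeff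
  simp [ha, hb, hc, hd]

lemma eval_linearForm_eq_zero (a b u v : k) :
    eval ![b, -a, u, v] (C a * X 0 + C b * X 1) = 0 := by
  simp only [map_add, map_mul, eval_C, eval_X, Matrix.cons_val_zero, Matrix.cons_val_one]
  ring

lemma ne_zero_or_ne_zero_of_linearForm_ne_zero {a b : k}
    (h : C a * X 0 + C b * X 1 ≠ (0 : MvPolynomial (Fin 4) k)) : b ≠ 0 ∨ -a ≠ 0 := by
  by_contra! hab
  exact h (by simp [neg_eq_zero.1 hab.2, hab.1])

theorem eq_zero_of_X_zero_mul_add_X_one_mul_eq_zero {m : ℕ}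
    {U : Submodule k (MvPolynomial (Fin 4) k)} [FiniteDimensional k U] (hU : U ≤ biDeg k m 1)
    (hU4 : finrank k U ≤ 4) (hfree : IsBasepointFree U) {w : MvPolynomial (Fin 4) k}
    {a b c d : k} (hfac : w = (C a * X 0 + C b * X 1) * (C c * X 0 + C d * X 1)) (hw : w ≠ 0)
    (h2 : X 2 * w ∈ U) (h3 : X 3 * w ∈ U) {f g : MvPolynomial (Fin 4) k} (hf : f ∈ U)
    (hg : g ∈ U) (hfg : X 0 * f + X 1 * g = 0) : f = 0 ∧ g = 0 := by
  have hL₁ : C a * X 0 + C b * X 1 ≠ (0 : MvPolynomial (Fin 4) k) :=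
    left_ne_zero_of_mul (hfac ▸ hw)
  have hL₂ : C c * X 0 + C d * X 1 ≠ (0 : MvPolynomial (Fin 4) k) :=
    right_ne_zero_of_mul (hfac ▸ hw)
  obtain ⟨α, β, hαβ⟩ := mem_span_pair.1 <|
    mem_span_X_mul_of_eval_eq_zero hU hU4 hfree hw h2 h3
    (ne_zero_or_ne_zero_of_linearForm_ne_zero hL₁)
    (fun u v => by simp [hfac, eval_linearForm_eq_zero])
    (sub_mem (smul_mem _ b hf) (smul_mem _ a hg)) (fun u v => by
      have := congrArg (eval ![b, -a, u, v]) hfg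
      simp only [map_add, map_mul, eval_X, map_zero, Matrix.cons_val_zero,
        Matrix.cons_val_one] at this
      rw [map_sub, smul_eval, smul_eval]
      linear_combination this)
  rw [hfac] at hαβ
  simp only [smul_eq_C_mul] at hαβ
  have hf' : f = X 1 * (C c * X 0 + C d * X 1) * (C α * X 2 + C β * X 3) :=
    mul_left_cancel₀ hL₁ (by linear_combination C a * hfg - X 1 * hαβ)
  have hg' : g = -(X 0 * (C c * X 0 + C d * X 1) * (C α * X 2 + C β * X 3)) :=
    mul_left_cancel₀ hL₁ (by linear_combination C b * hfg + X 0 * hαβ)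
  have hst₂ := ne_zero_or_ne_zero_of_linearForm_ne_zero hL₂
  have hroot₂ : ∀ u v, eval ![d, -c, u, v] w = 0 := fun u v => by
    simp [hfac, eval_linearForm_eq_zero]
  refine eq_zero_of_mem_span_X_mul hw ?_ ?_ hfg
  · exact mem_span_X_mul_of_eval_eq_zero hU hU4 hfree hw h2 h3 hst₂ hroot₂ hf
      (fun u v => by simp [hf', eval_linearForm_eq_zero])
  · exact mem_span_X_mul_of_eval_eq_zero hU hU4 hfree hw h2 h3 hst₂ hroot₂ hg
      (fun u v => by simp [hg', eval_linearForm_eq_zero])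

end BidegreeTwoOne

open BidegreeTwoOne Module Submodule

/-- If U is basepoint free, then I_U cannot have first syzygies of
both bidegree (0,1) and bidegree (1,0). -/
theorem statement2 {k : Type*} [Field k] [IsAlgClosed k]
    (p : Fin 4 → MvPolynomial (Fin 4) k)
    (hli : LinearIndependent k p)
    (hdeg : ∀ i, p i ∈ biDeg k 2 1)
    (hbpf : (Ideal.span (Set.range p)).radical =
      Ideal.span {X 0, X 1} ⊓ Ideal.span {X 2, X 3}) :
    ¬ (Syz p 0 1 ≠ ⊥ ∧ Syz p 1 0 ≠ ⊥) := by
  rintro ⟨h01, h10⟩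
  have hU : span k (Set.range p) ≤ biDeg k 2 1 := span_le.2 (Set.range_subset_iff.2 hdeg)
  have := FiniteDimensional.span_of_finite k (Set.finite_range p)
  have hU4 : finrank k (span k (Set.range p)) ≤ 4 := by simp [finrank_span_eq_card hli]
  obtain ⟨ℓ, hℓ, hℓ0⟩ := (Submodule.ne_bot_iff _).1 h01
  obtain ⟨q, hq, q', hq', hqq'0, hqq'⟩ :=
    exists_pair_of_mem_Syz hli biDeg_zero_one_le hℓ hℓ0
  obtain ⟨w, rfl, rfl⟩ := exists_of_X_mul_add_X_mul_eq_zero (by decide) hqq'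
  have hw : w ≠ 0 := by rintro rfl; simp at hqq'0
  obtain ⟨a, b, c, d, hfac⟩ :=
    exists_eq_mul_of_mem_biDeg_two_zero (mem_biDeg_of_X_three_mul_mem (n := 0) (hU hq))
  obtain ⟨m, hm, hm0⟩ := (Submodule.ne_bot_iff _).1 h10
  obtain ⟨f, hf, g, hg, hfg0, hfg⟩ := exists_pair_of_mem_Syz hli biDeg_one_zero_le hm hm0
  have := eq_zero_of_X_zero_mul_add_X_one_mul_eq_zero hU hU4
    (isBasepointFree_span_of_radical_eq hbpf) hfac hw (neg_mem_iff.1 hq') hq hf hg hfg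
  tauto
end
end

section
/- If U is basepoint free, then the k-vector space Syz_{(1,0)} of bidegree (1,0) syzygies on p_0,…,p_3 has dimension at most 1; that is, there can be at most one linear first syzygy of bidegree (1,0). -/
/-!
A syzygy `ℓᵢ = aᵢ s + bᵢ t` of bidegree (1,0) gives `s A + t B = 0` with `A = ∑ aᵢ pᵢ`
and `B = ∑ bᵢ pᵢ`, hence `A = t M` and `B = -s M` for a form `M` of bidegree (1,1) with
`s M, t M ∈ U`; by linear independence of the `pᵢ` the syzygy is determined by `M`.
Two independent syzygies would give independent `M, M'`. If `s M, t M, s M', t M'` are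
independent, they span `U`, which then vanishes at a common zero of `M` and `M'` on `ℙ¹ × ℙ¹`.
Otherwise a relation among them reads `s N + t N' = 0` for combinations `N, N'` of `M, M'`,
so `N = t L` and `N' = -s L` with `L` of bidegree (0,1), and `U` contains the 3-dimensional
space `L · R_(2,0)`. Over the zero of `L` on the second factor, the one remaining generator of
`U` is a binary quadratic in `s, t`, which has a zero. Either way `U` has a base point.
-/

open MvPolynomial

noncomputable section

lemma Submodule.exists_le_sup_span_singleton {K V : Type*} [Field K] [AddCommGroup V]
    [Module K V] [FiniteDimensional K V] {R W : Submodule K V} (hRW : R ≤ W)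
    (h : Module.finrank K W ≤ Module.finrank K R + 1) : ∃ w, W ≤ R ⊔ K ∙ w := by
  by_cases hWR : W ≤ R
  · exact ⟨0, le_sup_of_le_left hWR⟩
  obtain ⟨w, hwW, hwR⟩ := SetLike.not_le_iff_exists.mp hWR
  refine ⟨w, (eq_of_le_of_finrank_le (sup_le hRW ((span_singleton_le_iff_mem w W).mpr hwW))
    ?_).ge⟩
  rwa [finrank_sup_span_singleton hwR]

lemma exists_ne_zero_quadratic_form_eq_zero {k : Type*} [Field k] [IsAlgClosed k] (a b c : k) :
    ∃ x : Fin 2 → k, x ≠ 0 ∧ a * x 0 ^ 2 + b * (x 0 * x 1) + c * x 1 ^ 2 = 0 := by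
  by_cases ha : a = 0
  · exact ⟨![1, 0], by simp, by simp [ha]⟩
  obtain ⟨r, hr⟩ := IsAlgClosed.exists_root
    (Polynomial.C a * Polynomial.X ^ 2 + Polynomial.C b * Polynomial.X + Polynomial.C c)
    (by rw [Polynomial.degree_quadratic ha]; exact two_ne_zero)
  exact ⟨![r, 1], by simp, by simpa using hr⟩

lemma eq_zero_or_eq_zero_of_radical_eq {k : Type*} [Field k] {I : Ideal (MvPolynomial (Fin 4) k)}
    (hI : I.radical = Ideal.span {X 0, X 1} ⊓ Ideal.span {X 2, X 3}) {x y : Fin 2 → k}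
    (hxy : I ≤ RingHom.ker (aeval ![x 0, x 1, y 0, y 1])) : x = 0 ∨ y = 0 := by
  have hker := hI ▸ (RingHom.ker_isPrime _).radical_le_iff.mpr hxy
  have hprod : ∀ i j : Fin 2, x i * y j = 0 := by
    intro i j
    have hmem : X (Fin.castAdd 2 i) * X (Fin.natAdd 2 j) ∈
        Ideal.span {X 0, X 1} ⊓ Ideal.span {(X 2 : MvPolynomial (Fin 4) k), X 3} :=
      ⟨Ideal.mul_mem_right _ _ (Ideal.subset_span (by fin_cases i <;> simp)),
        Ideal.mul_mem_left _ _ (Ideal.subset_span (by fin_cases j <;> simp))⟩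
    fin_cases i <;> fin_cases j <;> simpa using hker hmem
  refine or_iff_not_imp_left.mpr fun hx => ?_
  obtain ⟨i, hi⟩ := Function.ne_iff.mp hx
  exact funext fun j => (mul_eq_zero.mp (hprod i j)).resolve_left hi

namespace BigradedSyzygy

variable {k : Type*} [Field k]

/-- Coefficient vectors of forms of bidegree `(m, n)` in `s, t, u, v = X 0, X 1, X 2, X 3`:
`c a b` is the coefficient of `s ^ (m - a) * t ^ a * u ^ (n - b) * v ^ b`. -/
abbrev Coeffs (k : Type*) (m n : ℕ) := Fin (m + 1) → Fin (n + 1) → k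

def exponent (m n : ℕ) (a : Fin (m + 1)) (b : Fin (n + 1)) : Fin 4 →₀ ℕ :=
  Finsupp.equivFunOnFinite.symm ![m - a, a, n - b, b]

lemma exponent_inj {m n : ℕ} {a a' : Fin (m + 1)} {b b' : Fin (n + 1)} :
    exponent m n a b = exponent m n a' b' ↔ a = a' ∧ b = b' := by
  refine ⟨fun h => ⟨Fin.ext ?_, Fin.ext ?_⟩, fun h => by rw [h.1, h.2]⟩
  · simpa [exponent] using congrArg (· 1) h
  · simpa [exponent] using congrArg (· 3) h

lemma eq_exponent {m n : ℕ} {d : Fin 4 →₀ ℕ} (h01 : d 0 + d 1 = m) (h23 : d 2 + d 3 = n) :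
    d = exponent m n ⟨d 1, by omega⟩ ⟨d 3, by omega⟩ := by
  ext i; fin_cases i <;> simp [exponent] <;> omega

lemma single_add_exponent_zero {m n : ℕ} (a : Fin (m + 1)) (b : Fin (n + 1)) :
    Finsupp.single 0 1 + exponent m n a b = exponent (m + 1) n a.castSucc b := by
  ext i; fin_cases i <;> simp [exponent]; omega

lemma single_add_exponent_one {m n : ℕ} (a : Fin (m + 1)) (b : Fin (n + 1)) :
    Finsupp.single 1 1 + exponent m n a b = exponent (m + 1) n a.succ b := by
  ext i; fin_cases i <;> simp [exponent]; omega

def ofCoeffs (m n : ℕ) : Coeffs k m n →ₗ[k] MvPolynomial (Fin 4) k where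
  toFun c := ∑ a, ∑ b, monomial (exponent m n a b) (c a b)
  map_add' c c' := by simp [Finset.sum_add_distrib]
  map_smul' r c := by simp [Finset.smul_sum, smul_monomial]

def toCoeffs (m n : ℕ) : MvPolynomial (Fin 4) k →ₗ[k] Coeffs k m n :=
  LinearMap.pi fun a => LinearMap.pi fun b => lcoeff k (exponent m n a b)

lemma coeff_ofCoeffs (m n : ℕ) (c : Coeffs k m n) (d : Fin 4 →₀ ℕ) :
    coeff d (ofCoeffs m n c) = ∑ a, ∑ b, if exponent m n a b = d then c a b else 0 := by
  simp [ofCoeffs, coeff_sum, coeff_monomial]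

lemma toCoeffs_ofCoeffs (m n : ℕ) (c : Coeffs k m n) : toCoeffs m n (ofCoeffs m n c) = c := by
  ext a b
  simp [toCoeffs, coeff_ofCoeffs, exponent_inj, ite_and]

lemma ofCoeffs_toCoeffs {m n : ℕ} {q : MvPolynomial (Fin 4) k} (hq : q ∈ biDeg k m n) :
    ofCoeffs m n (toCoeffs m n q) = q := by
  ext d
  by_cases hd : d ∈ q.support
  · obtain ⟨h01, h23⟩ := hq d hd
    rw [eq_exponent h01 h23]
    exact congrFun (congrFun (toCoeffs_ofCoeffs m n _) _) _
  · rw [notMem_support_iff.mp hd, coeff_ofCoeffs]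
    refine Finset.sum_eq_zero fun a _ => Finset.sum_eq_zero fun b _ => ite_eq_right_iff.mpr ?_
    rintro rfl
    simpa [toCoeffs] using hd

lemma ofCoeffs_one_zero (c : Coeffs k 1 0) : ofCoeffs 1 0 c = c 0 0 • X 0 + c 1 0 • X 1 := by
  have h0 : exponent 1 0 0 0 = Finsupp.single 0 1 := by ext i; fin_cases i <;> simp [exponent]
  have h1 : exponent 1 0 1 0 = Finsupp.single 1 1 := by ext i; fin_cases i <;> simp [exponent]
  simp [ofCoeffs, h0, h1, X, smul_monomial]

def mulS {m n : ℕ} : Coeffs k m n →ₗ[k] Coeffs k (m + 1) n where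
  toFun c := Fin.snoc c 0
  map_add' c c' := by ext i; refine Fin.lastCases ?_ (fun j => ?_) i <;> simp
  map_smul' r c := by ext i; refine Fin.lastCases ?_ (fun j => ?_) i <;> simp

def mulT {m n : ℕ} : Coeffs k m n →ₗ[k] Coeffs k (m + 1) n where
  toFun c := Fin.cons 0 c
  map_add' c c' := by ext i; refine Fin.cases ?_ (fun j => ?_) i <;> simp
  map_smul' r c := by ext i; refine Fin.cases ?_ (fun j => ?_) i <;> simp

lemma mulS_apply {m n : ℕ} (c : Coeffs k m n) : mulS c = Fin.snoc c 0 := rfl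

lemma mulT_apply {m n : ℕ} (c : Coeffs k m n) : mulT c = Fin.cons 0 c := rfl

lemma mulT_injective {m n : ℕ} :
    Function.Injective (mulT : Coeffs k m n → Coeffs k (m + 1) n) :=
  fun _ _ h => (Fin.cons_injective2 (by simpa only [mulT_apply] using h)).2

lemma X_zero_mul_ofCoeffs {m n : ℕ} (c : Coeffs k m n) :
    X 0 * ofCoeffs m n c = ofCoeffs (m + 1) n (mulS c) := by
  simp only [ofCoeffs, LinearMap.coe_mk, AddHom.coe_mk, Finset.mul_sum, X, monomial_mul, one_mul,
    single_add_exponent_zero]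
  rw [Fin.sum_univ_castSucc (n := m + 1)]
  simp [mulS_apply]

lemma X_one_mul_ofCoeffs {m n : ℕ} (c : Coeffs k m n) :
    X 1 * ofCoeffs m n c = ofCoeffs (m + 1) n (mulT c) := by
  simp only [ofCoeffs, LinearMap.coe_mk, AddHom.coe_mk, Finset.mul_sum, X, monomial_mul, one_mul,
    single_add_exponent_one]
  rw [Fin.sum_univ_succ (n := m + 1)]
  simp [mulT_apply]

lemma eq_mulT_tail_of_mulS_add_mulT_eq_zero {m n : ℕ} {c d : Coeffs k (m + 1) n}
    (h : mulS c + mulT d = 0) : c = mulT (Fin.tail c) ∧ d = -mulS (Fin.tail c) := by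
  have hc : c = mulT (Fin.tail c) := by
    have h0 := congrFun h 0
    simp only [mulS_apply, mulT_apply, Pi.add_apply, Fin.snoc_apply_zero, Fin.cons_zero, add_zero,
      Pi.zero_apply] at h0
    rw [mulT_apply, ← h0, Fin.cons_self_tail]
  refine ⟨hc, eq_neg_of_add_eq_zero_right (funext fun i => ?_)⟩
  rw [hc, mulS_apply, mulT_apply, ← Fin.cons_snoc_eq_snoc_cons, mulT_apply] at h
  simpa only [mulS_apply, Pi.add_apply, Fin.cons_succ, Pi.zero_apply] using congrFun h i.succ

lemma eq_mulT_of_X_zero_mul_add_X_one_mul_eq_zero {m n : ℕ} {A B : MvPolynomial (Fin 4) k}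
    (hA : A ∈ biDeg k (m + 1) n) (hB : B ∈ biDeg k (m + 1) n) (h : X 0 * A + X 1 * B = 0) :
    toCoeffs (m + 1) n A = mulT (Fin.tail (toCoeffs (m + 1) n A)) ∧
      toCoeffs (m + 1) n B = -mulS (Fin.tail (toCoeffs (m + 1) n A)) := by
  refine eq_mulT_tail_of_mulS_add_mulT_eq_zero ?_
  rw [← ofCoeffs_toCoeffs hA, ← ofCoeffs_toCoeffs hB, X_zero_mul_ofCoeffs, X_one_mul_ofCoeffs,
    ← map_add] at h
  simpa only [map_add, toCoeffs_ofCoeffs, map_zero] using congrArg (toCoeffs (m + 1 + 1) n) h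

def evalAt (m n : ℕ) (x y : Fin 2 → k) : Coeffs k m n →ₗ[k] k :=
  (aeval ![x 0, x 1, y 0, y 1]).toLinearMap ∘ₗ ofCoeffs m n

lemma evalAt_toCoeffs {m n : ℕ} (x y : Fin 2 → k) {q : MvPolynomial (Fin 4) k}
    (hq : q ∈ biDeg k m n) : evalAt m n x y (toCoeffs m n q) = aeval ![x 0, x 1, y 0, y 1] q := by
  simp [evalAt, ofCoeffs_toCoeffs hq]

lemma evalAt_mulS {m n : ℕ} (x y : Fin 2 → k) (c : Coeffs k m n) :
    evalAt (m + 1) n x y (mulS c) = x 0 * evalAt m n x y c := by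
  simp [evalAt, ← X_zero_mul_ofCoeffs]

lemma evalAt_mulT {m n : ℕ} (x y : Fin 2 → k) (c : Coeffs k m n) :
    evalAt (m + 1) n x y (mulT c) = x 1 * evalAt m n x y c := by
  simp [evalAt, ← X_one_mul_ofCoeffs]

lemma evalAt_apply {m n : ℕ} (x y : Fin 2 → k) (c : Coeffs k m n) :
    evalAt m n x y c = ∑ a, ∑ b,
      c a b * (x 0 ^ (m - a : ℕ) * x 1 ^ (a : ℕ) * y 0 ^ (n - b : ℕ) * y 1 ^ (b : ℕ)) := by
  simp [evalAt, ofCoeffs, eval_monomial, Finsupp.prod_fintype, Fin.prod_univ_four, exponent]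

lemma evalAt_zero_one (x y : Fin 2 → k) (L : Coeffs k 0 1) :
    evalAt 0 1 x y L = L 0 0 * y 0 + L 0 1 * y 1 := by
  simp [evalAt_apply, Fin.sum_univ_two]

lemma evalAt_one_one (x y : Fin 2 → k) (M : Coeffs k 1 1) :
    evalAt 1 1 x y M =
      (M 0 0 * y 0 + M 0 1 * y 1) * x 0 + (M 1 0 * y 0 + M 1 1 * y 1) * x 1 := by
  simp only [evalAt_apply, Nat.reduceAdd, Fin.sum_univ_two, Fin.val_zero, Fin.val_one, tsub_zero,
    tsub_self, pow_zero, pow_one]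
  ring

lemma evalAt_two_one (x y : Fin 2 → k) (w : Coeffs k 2 1) :
    evalAt 2 1 x y w = (w 0 0 * y 0 + w 0 1 * y 1) * x 0 ^ 2 +
      (w 1 0 * y 0 + w 1 1 * y 1) * (x 0 * x 1) + (w 2 0 * y 0 + w 2 1 * y 1) * x 1 ^ 2 := by
  simp only [evalAt_apply, Nat.reduceAdd, Fin.sum_univ_two, Fin.sum_univ_three, Fin.val_zero,
    Fin.val_one, Fin.val_two, tsub_zero, tsub_self, Nat.reduceSub, pow_zero, pow_one]
  ring

lemma exists_common_zero_evalAt_one_one [IsAlgClosed k] (M M' : Coeffs k 1 1) :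
    ∃ x y : Fin 2 → k, x ≠ 0 ∧ y ≠ 0 ∧ evalAt 1 1 x y M = 0 ∧ evalAt 1 1 x y M' = 0 := by
  -- `y` is a zero of the determinant of the two linear forms `M(·, y)`, `M'(·, y)` in `x`
  obtain ⟨y, hy, hdet⟩ := exists_ne_zero_quadratic_form_eq_zero
    (M 0 0 * M' 1 0 - M 1 0 * M' 0 0)
    (M 0 0 * M' 1 1 + M 0 1 * M' 1 0 - M 1 0 * M' 0 1 - M 1 1 * M' 0 0)
    (M 0 1 * M' 1 1 - M 1 1 * M' 0 1)
  obtain ⟨x, hx, hAx⟩ := (Matrix.exists_mulVec_eq_zero_iff (M :=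
    !![M 0 0 * y 0 + M 0 1 * y 1, M 1 0 * y 0 + M 1 1 * y 1;
      M' 0 0 * y 0 + M' 0 1 * y 1, M' 1 0 * y 0 + M' 1 1 * y 1])).mpr
    (by rw [Matrix.det_fin_two_of]; linear_combination hdet)
  refine ⟨x, y, hx, hy, ?_, ?_⟩ <;> rw [evalAt_one_one]
  · simpa [Matrix.vecHead, Matrix.vecTail] using congrFun hAx 0
  · simpa [Matrix.vecHead, Matrix.vecTail] using congrFun hAx 1

def multipliers {m n : ℕ} (W : Submodule k (Coeffs k (m + 1) n)) : Submodule k (Coeffs k m n) :=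
  W.comap mulS ⊓ W.comap mulT

lemma exists_ne_zero_forall_evalAt_zero_one_eq_zero (L : Coeffs k 0 1) :
    ∃ y : Fin 2 → k, y ≠ 0 ∧ ∀ x, evalAt 0 1 x y L = 0 := by
  by_cases hL : L 0 0 = 0
  · exact ⟨![1, 0], by simp, fun x => by simp [evalAt_zero_one, hL]⟩
  · refine ⟨![-L 0 1, L 0 0], by simp [hL], fun x => ?_⟩
    simp [evalAt_zero_one, mul_comm (L 0 1)]

lemma linearIndependent_quadratic_monomials_mul {L : Coeffs k 0 1} (hL : L ≠ 0) :
    LinearIndependent k ![mulS (mulS L), mulS (mulT L), mulT (mulT L)] := by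
  obtain ⟨b, hb⟩ : ∃ b, L 0 b ≠ 0 := by
    obtain ⟨a, ha⟩ := Function.ne_iff.mp hL
    rw [Fin.fin_one_eq_zero a] at ha
    exact Function.ne_iff.mp ha
  rw [Fintype.linearIndependent_iff]
  intro g hg a
  have hL2 : (Fin.cons 0 (Fin.cons 0 L) : Coeffs k 2 1) 2 = L 0 := rfl
  have := congrFun (congrFun hg a) b
  fin_cases a <;> simpa [Fin.sum_univ_three, mulS_apply, mulT_apply, Fin.snoc, hL2, hb] using this

section CommonZero

open Module Submodule

variable [IsAlgClosed k] {W : Submodule k (Coeffs k 2 1)}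

lemma exists_common_zero_of_linearIndependent_mulS_mulT (hW : finrank k W ≤ 4)
    {M M' : Coeffs k 1 1} (hM : M ∈ multipliers W) (hM' : M' ∈ multipliers W)
    (hind : LinearIndependent k ![mulS M, mulT M, mulS M', mulT M']) :
    ∃ x y : Fin 2 → k, x ≠ 0 ∧ y ≠ 0 ∧ W ≤ LinearMap.ker (evalAt 2 1 x y) := by
  obtain ⟨x, y, hx, hy, h, h'⟩ := exists_common_zero_evalAt_one_one M M'
  have hVW : span k (Set.range ![mulS M, mulT M, mulS M', mulT M']) ≤ W := by
    rw [span_le, Set.range_subset_iff]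
    intro i; fin_cases i
    exacts [hM.1, hM.2, hM'.1, hM'.2]
  have hWV := eq_of_le_of_finrank_le hVW (by rw [finrank_span_eq_card hind]; simpa using hW)
  refine ⟨x, y, hx, hy, hWV ▸ ?_⟩
  rw [span_le, Set.range_subset_iff]
  intro i; fin_cases i <;> simp [evalAt_mulS, evalAt_mulT, h, h']

lemma exists_common_zero_of_mulS_add_mulT_eq_zero (hW : finrank k W ≤ 4)
    {N N' : Coeffs k 1 1} (hN : N ∈ multipliers W) (hN' : N' ∈ multipliers W)
    (hrel : mulS N + mulT N' = 0) (hne : N ≠ 0) :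
    ∃ x y : Fin 2 → k, x ≠ 0 ∧ y ≠ 0 ∧ W ≤ LinearMap.ker (evalAt 2 1 x y) := by
  obtain ⟨hN_eq, hN'_eq⟩ := eq_mulT_tail_of_mulS_add_mulT_eq_zero hrel
  set L := Fin.tail N
  have hind := linearIndependent_quadratic_monomials_mul (L := L) fun h => hne (by
    rw [hN_eq, h, map_zero])
  have hRW : span k (Set.range ![mulS (mulS L), mulS (mulT L), mulT (mulT L)]) ≤ W := by
    rw [span_le, Set.range_subset_iff]
    intro i; fin_cases i
    · simpa [hN'_eq] using W.neg_mem hN'.1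
    · simpa [← hN_eq] using hN.1
    · simpa [← hN_eq] using hN.2
  obtain ⟨w, hw⟩ := exists_le_sup_span_singleton hRW
    (by rw [finrank_span_eq_card hind]; simpa using hW)
  obtain ⟨y, hy, hLy⟩ := exists_ne_zero_forall_evalAt_zero_one_eq_zero L
  obtain ⟨x, hx, hxw⟩ := exists_ne_zero_quadratic_form_eq_zero (w 0 0 * y 0 + w 0 1 * y 1)
    (w 1 0 * y 0 + w 1 1 * y 1) (w 2 0 * y 0 + w 2 1 * y 1)
  refine ⟨x, y, hx, hy, hw.trans (sup_le ?_ ?_)⟩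
  · rw [span_le, Set.range_subset_iff]
    intro i; fin_cases i <;> simp [evalAt_mulS, evalAt_mulT, hLy]
  · rwa [span_singleton_le_iff_mem, LinearMap.mem_ker, evalAt_two_one]

lemma exists_common_zero_of_linearIndependent (hW : finrank k W ≤ 4) {M M' : Coeffs k 1 1}
    (hM : M ∈ multipliers W) (hM' : M' ∈ multipliers W) (hMM' : LinearIndependent k ![M, M']) :
    ∃ x y : Fin 2 → k, x ≠ 0 ∧ y ≠ 0 ∧ W ≤ LinearMap.ker (evalAt 2 1 x y) := by
  by_cases hind : LinearIndependent k ![mulS M, mulT M, mulS M', mulT M']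
  · exact exists_common_zero_of_linearIndependent_mulS_mulT hW hM hM' hind
  obtain ⟨g, hg, i, hi⟩ := Fintype.not_linearIndependent_iff.mp hind
  have hrel : mulS (g 0 • M + g 2 • M') + mulT (g 1 • M + g 3 • M') = 0 := by
    rw [← hg]
    simp only [map_add, map_smul, Fin.sum_univ_four, Matrix.cons_val_zero, Matrix.cons_val_one,
      Matrix.cons_val]
    abel
  refine exists_common_zero_of_mulS_add_mulT_eq_zero hW
    (add_mem (smul_mem _ _ hM) (smul_mem _ _ hM'))
    (add_mem (smul_mem _ _ hM) (smul_mem _ _ hM')) hrel fun hN => ?_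
  have hN' : g 1 • M + g 3 • M' = 0 :=
    mulT_injective (by rw [map_zero, ← hrel, hN, map_zero, zero_add])
  obtain ⟨h0, h2⟩ := LinearIndependent.pair_iff.mp hMM' _ _ hN
  obtain ⟨h1, h3⟩ := LinearIndependent.pair_iff.mp hMM' _ _ hN'
  fin_cases i <;> simp_all

lemma rank_multipliers_le_one (hW : finrank k W ≤ 4)
    (hfree : ∀ x y : Fin 2 → k, W ≤ LinearMap.ker (evalAt 2 1 x y) → x = 0 ∨ y = 0) :
    Module.rank k (multipliers W) ≤ 1 := by
  by_contra! h
  have : Nontrivial (multipliers W) := rank_pos_iff_nontrivial.mp (zero_lt_one.trans h)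
  obtain ⟨M, hM⟩ := exists_ne (0 : multipliers W)
  obtain ⟨M', hMM'⟩ := exists_linearIndependent_pair_of_one_lt_rank h hM
  have hpair : LinearIndependent k ![(M : Coeffs k 1 1), M'] := by
    rw [LinearIndependent.pair_iff] at hMM' ⊢
    exact fun s t hst => hMM' s t (Subtype.ext (by simpa using hst))
  obtain ⟨x, y, hx, hy, hxy⟩ := exists_common_zero_of_linearIndependent hW M.2 M'.2 hpair
  rcases hfree x y hxy with rfl | rfl <;> contradiction

end CommonZero

variable (p : Fin 4 → MvPolynomial (Fin 4) k)

/-- `syzPart p 0 ℓ = ∑ aᵢ pᵢ` and `syzPart p 1 ℓ = ∑ bᵢ pᵢ` when `ℓᵢ = aᵢ s + bᵢ t`. -/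
def syzPart (a : Fin 2) : (Fin 4 → MvPolynomial (Fin 4) k) →ₗ[k] MvPolynomial (Fin 4) k where
  toFun ℓ := ∑ i, toCoeffs 1 0 (ℓ i) a 0 • p i
  map_add' ℓ ℓ' := by simp [add_smul, Finset.sum_add_distrib]
  map_smul' r ℓ := by simp [smul_smul, Finset.smul_sum]

lemma syzPart_apply (a : Fin 2) (ℓ : Fin 4 → MvPolynomial (Fin 4) k) :
    syzPart p a ℓ = ∑ i, toCoeffs 1 0 (ℓ i) a 0 • p i := rfl

/-- The form `M` with `syzPart p 0 ℓ = t M` of a syzygy `ℓ`. -/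
def syzToMultiplier : (Fin 4 → MvPolynomial (Fin 4) k) →ₗ[k] Coeffs k 1 1 :=
  LinearMap.funLeft k (Fin 2 → k) Fin.succ ∘ₗ toCoeffs 2 1 ∘ₗ syzPart p 0

def coeffSpan : Submodule k (Coeffs k 2 1) := (Submodule.span k (Set.range p)).map (toCoeffs 2 1)

variable {p}

lemma syzPart_mem_span (a : Fin 2) (ℓ : Fin 4 → MvPolynomial (Fin 4) k) :
    syzPart p a ℓ ∈ Submodule.span k (Set.range p) := by
  rw [syzPart_apply]
  exact Submodule.sum_mem _ fun i _ =>
    Submodule.smul_mem _ _ (Submodule.subset_span (Set.mem_range_self i))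

lemma span_le_biDeg {m n : ℕ} (hdeg : ∀ i, p i ∈ biDeg k m n) :
    Submodule.span k (Set.range p) ≤ biDeg k m n :=
  Submodule.span_le.mpr (Set.range_subset_iff.mpr hdeg)

lemma syzMap_eq_X_zero_mul_add_X_one_mul {ℓ : Fin 4 → MvPolynomial (Fin 4) k}
    (hℓ : ∀ i, ℓ i ∈ biDeg k 1 0) :
    syzMap p ℓ = X 0 * syzPart p 0 ℓ + X 1 * syzPart p 1 ℓ := by
  simp only [syzMap, syzPart, LinearMap.coe_mk, AddHom.coe_mk, Finset.mul_sum,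
    ← Finset.sum_add_distrib]
  refine Finset.sum_congr rfl fun i _ => ?_
  conv_lhs => rw [← ofCoeffs_toCoeffs (hℓ i), ofCoeffs_one_zero]
  simp only [add_mul, smul_mul_assoc, mul_smul_comm]

lemma mem_biDeg_of_mem_syz {a b : ℕ} {ℓ : Fin 4 → MvPolynomial (Fin 4) k} (hℓ : ℓ ∈ Syz p a b)
    (i : Fin 4) : ℓ i ∈ biDeg k a b :=
  Submodule.mem_pi.mp (Submodule.mem_inf.mp hℓ).1 i (Set.mem_univ i)

lemma toCoeffs_syzPart (hdeg : ∀ i, p i ∈ biDeg k 2 1) {ℓ : Fin 4 → MvPolynomial (Fin 4) k}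
    (hℓ : ℓ ∈ Syz p 1 0) :
    toCoeffs 2 1 (syzPart p 0 ℓ) = mulT (syzToMultiplier p ℓ) ∧
      toCoeffs 2 1 (syzPart p 1 ℓ) = -mulS (syzToMultiplier p ℓ) := by
  have hsyz := (Submodule.mem_inf.mp hℓ).2
  rw [LinearMap.mem_ker, syzMap_eq_X_zero_mul_add_X_one_mul (mem_biDeg_of_mem_syz hℓ)] at hsyz
  exact eq_mulT_of_X_zero_mul_add_X_one_mul_eq_zero (span_le_biDeg hdeg (syzPart_mem_span 0 ℓ))
    (span_le_biDeg hdeg (syzPart_mem_span 1 ℓ)) hsyz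

lemma syzToMultiplier_mem_multipliers (hdeg : ∀ i, p i ∈ biDeg k 2 1)
    {ℓ : Fin 4 → MvPolynomial (Fin 4) k} (hℓ : ℓ ∈ Syz p 1 0) :
    syzToMultiplier p ℓ ∈ multipliers (coeffSpan p) := by
  obtain ⟨h0, h1⟩ := toCoeffs_syzPart hdeg hℓ
  refine Submodule.mem_inf.mpr ⟨?_, ?_⟩
  · rw [Submodule.mem_comap, ← neg_neg (mulS _), ← h1]
    exact Submodule.neg_mem _ (Submodule.mem_map_of_mem (syzPart_mem_span 1 ℓ))
  · rw [Submodule.mem_comap, ← h0]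
    exact Submodule.mem_map_of_mem (syzPart_mem_span 0 ℓ)

lemma eq_zero_of_syzToMultiplier_eq_zero (hdeg : ∀ i, p i ∈ biDeg k 2 1)
    (hli : LinearIndependent k p) {ℓ : Fin 4 → MvPolynomial (Fin 4) k} (hℓ : ℓ ∈ Syz p 1 0)
    (h : syzToMultiplier p ℓ = 0) : ℓ = 0 := by
  obtain ⟨h0, h1⟩ := toCoeffs_syzPart hdeg hℓ
  have hpart : ∀ a, syzPart p a ℓ = 0 := by
    intro a
    rw [← ofCoeffs_toCoeffs (span_le_biDeg hdeg (syzPart_mem_span a ℓ))]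
    fin_cases a <;> simp [h0, h1, h]
  have hcoeff : ∀ i a, toCoeffs 1 0 (ℓ i) a 0 = 0 := fun i a =>
    Fintype.linearIndependent_iff.mp hli _ (by rw [← syzPart_apply]; exact hpart a) i
  funext i
  rw [← ofCoeffs_toCoeffs (mem_biDeg_of_mem_syz hℓ i), ofCoeffs_one_zero, hcoeff, hcoeff]
  simp

lemma rank_syz_le_rank_multipliers (hdeg : ∀ i, p i ∈ biDeg k 2 1) (hli : LinearIndependent k p) :
    Module.rank k (Syz p 1 0) ≤
      Module.rank k (multipliers (coeffSpan p)) := by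
  refine LinearMap.rank_le_of_injective
    (((syzToMultiplier p).comp (Syz p 1 0).subtype).codRestrict _
      fun ℓ => syzToMultiplier_mem_multipliers hdeg ℓ.2) ?_
  refine (injective_iff_map_eq_zero _).mpr fun ℓ hℓ => Subtype.ext ?_
  exact eq_zero_of_syzToMultiplier_eq_zero hdeg hli ℓ.2 (congrArg Subtype.val hℓ)

lemma finrank_coeffSpan_le (p : Fin 4 → MvPolynomial (Fin 4) k) :
    Module.finrank k (coeffSpan p) ≤ 4 := by
  have : Module.Finite k (Submodule.span k (Set.range p)) :=
    FiniteDimensional.span_of_finite k (Set.finite_range p)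
  exact (Submodule.finrank_map_le _ _).trans
    (by simpa [Set.finrank] using finrank_range_le_card (R := k) p)

lemma eq_zero_or_eq_zero_of_coeffSpan_le_ker (hdeg : ∀ i, p i ∈ biDeg k 2 1)
    (hbpf : (Ideal.span (Set.range p)).radical = Ideal.span {X 0, X 1} ⊓ Ideal.span {X 2, X 3})
    {x y : Fin 2 → k} (hxy : coeffSpan p ≤ LinearMap.ker (evalAt 2 1 x y)) : x = 0 ∨ y = 0 := by
  refine eq_zero_or_eq_zero_of_radical_eq hbpf (Ideal.span_le.mpr ?_)
  rintro _ ⟨i, rfl⟩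
  rw [SetLike.mem_coe, RingHom.mem_ker, ← evalAt_toCoeffs x y (hdeg i)]
  exact hxy (Submodule.mem_map_of_mem (Submodule.subset_span (Set.mem_range_self i)))

end BigradedSyzygy

/-- If U is basepoint free, the space of bidegree (1,0) syzygies has
dimension at most one. -/
theorem statement3 {k : Type*} [Field k] [IsAlgClosed k]
    (p : Fin 4 → MvPolynomial (Fin 4) k)
    (hli : LinearIndependent k p)
    (hdeg : ∀ i, p i ∈ biDeg k 2 1)
    (hbpf : (Ideal.span (Set.range p)).radical =
      Ideal.span {X 0, X 1} ⊓ Ideal.span {X 2, X 3}) :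
    Module.rank k ↥(Syz p 1 0) ≤ 1 := by
  exact (BigradedSyzygy.rank_syz_le_rank_multipliers hdeg hli).trans
    (BigradedSyzygy.rank_multipliers_le_one (BigradedSyzygy.finrank_coeffSpan_le p)
      fun _ _ => BigradedSyzygy.eq_zero_or_eq_zero_of_coeffSpan_le_ker hdeg hbpf)
end
end

section
/- Suppose U is basepoint free. Then the space Syz_{(0,1)} of bidegree (0,1) syzygies on p_0,…,p_3 has dimension at least 2 if and only if there exist bihomogeneous polynomials q_1, q_2 of bidegree (2,0) with radical of ⟨q_1,q_2⟩ equal to ⟨s,t⟩ such that I_U = ⟨u,v⟩ ∩ ⟨q_1,q_2⟩. -/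
/-!
A syzygy `ℓ = (αᵢ u + βᵢ v)ᵢ` of bidegree `(0,1)` says `u P + v Q = 0` for `P = ∑ αᵢ pᵢ` and
`Q = ∑ βᵢ pᵢ`, so `P = v q` and `Q = -u q` for a form `q` of bidegree `(2,0)` with `u q, v q ∈ U`.
Since the `pᵢ` are independent, `ℓ ↦ q` identifies `Syz_(0,1)` with the space of such `q`.

Two independent such `q₁, q₂` give four independent forms `u qⱼ, v qⱼ` in the 4-dimensional `U`,
so they span `U` and `I_U = ⟨u,v⟩⟨q₁,q₂⟩`, which equals `⟨u,v⟩ ∩ ⟨q₁,q₂⟩` because the `qⱼ` only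
involve `s, t`. Conversely, if `I_U = ⟨u,v⟩ ∩ ⟨q₁,q₂⟩`, comparing the bidegree `(2,1)` parts of
`I_U = ⟨u qⱼ, v qⱼ⟩` shows that these four forms span `U`, so they, and hence `q₁, q₂`, are
independent. Finally, basepoint freeness puts `s u, t u` into `√I_U ⊆ √⟨q₁,q₂⟩`, and setting
`u = v = 1` gives `s, t ∈ √⟨q₁,q₂⟩`.
-/
open MvPolynomial

noncomputable section

namespace MvPolynomial

variable {σ R : Type*} [CommRing R]

theorem aeval_eq_self_of_forall_mem_vars {g : σ → MvPolynomial σ R} {f : MvPolynomial σ R}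
    (hg : ∀ i ∈ f.vars, g i = X i) : aeval g f = f := by
  conv_rhs => rw [← aeval_X_left_apply f]
  exact eval₂Hom_congr' rfl (fun i hi _ => hg i hi) rfl

theorem sub_aeval_mem_span_X_image (t : Set σ) [DecidablePred (· ∈ t)] (f : MvPolynomial σ R) :
    f - aeval (fun i => if i ∈ t then 0 else X i) f ∈
      Ideal.span (X '' t : Set (MvPolynomial σ R)) := by
  induction f using MvPolynomial.induction_on with
  | C a => simp
  | add f g hf hg => simpa [add_sub_add_comm] using add_mem hf hg
  | mul_X f i hf =>
    by_cases hi : i ∈ t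
    · simpa [hi] using Ideal.mul_mem_left _ f (Ideal.subset_span (Set.mem_image_of_mem X hi))
    · simpa [hi, sub_mul] using Ideal.mul_mem_right (X i) _ hf

theorem span_X_image_eq_ker (t : Set σ) [DecidablePred (· ∈ t)] :
    Ideal.span (X '' t : Set (MvPolynomial σ R)) =
      RingHom.ker (aeval fun i => if i ∈ t then (0 : MvPolynomial σ R) else X i) := by
  refine le_antisymm (Ideal.span_le.2 ?_) fun f hf => ?_
  · rintro _ ⟨i, hi, rfl⟩
    simp [hi]
  · simpa only [RingHom.mem_ker.1 hf, sub_zero] using sub_aeval_mem_span_X_image (R := R) t f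

theorem isPrime_span_X_image [IsDomain R] (t : Set σ) :
    (Ideal.span (X '' t : Set (MvPolynomial σ R))).IsPrime := by
  classical
  rw [span_X_image_eq_ker t]
  exact RingHom.ker_isPrime _

theorem exists_eq_X_mul_of_X_mul_add_X_mul_eq_zero_s5 [IsDomain R] {i j : σ} (hij : i ≠ j)
    {P Q : MvPolynomial σ R} (h : X i * P + X j * Q = 0) :
    ∃ w, P = X j * w ∧ Q = -(X i * w) := by
  have hdvd : X j ∣ X i * P := ⟨-Q, by linear_combination h⟩
  obtain ⟨w, rfl⟩ := (X_prime.dvd_or_dvd hdvd).resolve_left (mt X_dvd_X.1 hij.symm)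
  have hQ : X j * (Q + X i * w) = 0 := by linear_combination h
  exact ⟨w, rfl, by linear_combination (mul_eq_zero.1 hQ).resolve_left (X_ne_zero j)⟩

variable {M : Type*} [AddCancelCommMonoid M] {w : σ → M}

theorem IsWeightedHomogeneous.of_X_mul {i : σ} {f : MvPolynomial σ R} {m : M}
    (h : IsWeightedHomogeneous w (X i * f) (w i + m)) : IsWeightedHomogeneous w f m := by
  intro d hd
  have hXd : coeff (Finsupp.single i 1 + d) (X i * f) ≠ 0 := by rwa [coeff_X_mul]
  have := h hXd
  rw [map_add, Finsupp.weight_single, one_smul] at this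
  exact add_left_cancel this

theorem weightedHomogeneousComponent_mul_of_isWeightedHomogeneous {q : MvPolynomial σ R} {m : M}
    (hq : IsWeightedHomogeneous w q m) (n : M) (g : MvPolynomial σ R) :
    weightedHomogeneousComponent w (n + m) (g * q) = weightedHomogeneousComponent w n g * q := by
  induction g using MvPolynomial.induction_on' with
  | add f g hf hg => rw [add_mul, map_add, map_add, hf, hg, add_mul]
  | monomial d c =>
    have hmon := isWeightedHomogeneous_monomial w d c rfl
    by_cases hd : Finsupp.weight w d = n
    · subst hd
      rw [(hmon.mul hq).weightedHomogeneousComponent_same, hmon.weightedHomogeneousComponent_same]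
    · rw [(hmon.mul hq).weightedHomogeneousComponent_ne _ (fun h => hd (add_right_cancel h).symm),
        hmon.weightedHomogeneousComponent_ne _ (Ne.symm hd), zero_mul]

variable [PartialOrder M] [CanonicallyOrderedAdd M] [IsAddTorsionFree M]

theorem mem_span_of_mem_ideal_span_of_isWeightedHomogeneous (hw : ∀ i, w i ≠ 0)
    {ι : Type*} [Fintype ι] {p : ι → MvPolynomial σ R} {m : M}
    (hp : ∀ i, IsWeightedHomogeneous w (p i) m) {f : MvPolynomial σ R}
    (hf : IsWeightedHomogeneous w f m) (hfp : f ∈ Ideal.span (Set.range p)) :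
    f ∈ Submodule.span R (Set.range p) := by
  obtain ⟨c, rfl⟩ := Ideal.mem_span_range_iff_exists_fun.1 hfp
  rw [← hf.weightedHomogeneousComponent_same, map_sum]
  refine Submodule.sum_mem _ fun i _ => ?_
  have hcomp := weightedHomogeneousComponent_mul_of_isWeightedHomogeneous (hp i) 0 (c i)
  rw [zero_add, weightedHomogeneousComponent_zero _ hw] at hcomp
  rw [hcomp, ← smul_eq_C_mul]
  exact Submodule.smul_mem _ _ (Submodule.subset_span ⟨i, rfl⟩)

theorem span_eq_of_ideal_span_eq_of_isWeightedHomogeneous (hw : ∀ i, w i ≠ 0)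
    {ι ι' : Type*} [Fintype ι] [Fintype ι'] {p : ι → MvPolynomial σ R}
    {p' : ι' → MvPolynomial σ R} {m : M} (hp : ∀ i, IsWeightedHomogeneous w (p i) m)
    (hp' : ∀ i, IsWeightedHomogeneous w (p' i) m)
    (h : Ideal.span (Set.range p) = Ideal.span (Set.range p')) :
    Submodule.span R (Set.range p) = Submodule.span R (Set.range p') := by
  refine le_antisymm (Submodule.span_le.2 ?_) (Submodule.span_le.2 ?_) <;> rintro _ ⟨i, rfl⟩
  · exact mem_span_of_mem_ideal_span_of_isWeightedHomogeneous hw hp' (hp i)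
      (h ▸ Ideal.subset_span ⟨i, rfl⟩)
  · exact mem_span_of_mem_ideal_span_of_isWeightedHomogeneous hw hp (hp' i)
      (h.symm ▸ Ideal.subset_span ⟨i, rfl⟩)

end MvPolynomial

theorem two_le_rank_iff_exists_linearIndependent_pair {K V : Type*} [Ring K] [Nontrivial K]
    [AddCommGroup V] [Module K V] (W : Submodule K V) :
    2 ≤ Module.rank K W ↔ ∃ a b : V, a ∈ W ∧ b ∈ W ∧ LinearIndependent K ![a, b] := by
  rw [← Nat.cast_ofNat, natCast_le_rank_iff]
  constructor
  · rintro ⟨f, hf⟩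
    refine ⟨f 0, f 1, (f 0).2, (f 1).2, ?_⟩
    convert hf.map' W.subtype W.ker_subtype
    ext i
    fin_cases i <;> rfl
  · rintro ⟨a, b, ha, hb, hab⟩
    refine ⟨![⟨a, ha⟩, ⟨b, hb⟩], LinearIndependent.of_comp W.subtype ?_⟩
    convert hab
    ext i
    fin_cases i <;> rfl

def biWeight : Fin 4 → ℕ × ℕ := ![(1, 0), (1, 0), (0, 1), (0, 1)]

theorem biWeight_ne_zero (i : Fin 4) : biWeight i ≠ 0 := by
  fin_cases i <;> simp [biWeight]

theorem weight_biWeight (d : Fin 4 →₀ ℕ) :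
    Finsupp.weight biWeight d = (d 0 + d 1, d 2 + d 3) := by
  simp [Finsupp.weight_eq_sum, Fin.sum_univ_four, biWeight, Prod.ext_iff]

section Bigraded

variable {k : Type*} [CommRing k]

theorem mem_biDeg_iff_isWeightedHomogeneous {m n : ℕ} {f : MvPolynomial (Fin 4) k} :
    f ∈ biDeg k m n ↔ f.IsWeightedHomogeneous biWeight (m, n) := by
  refine ⟨fun h d hd => ?_, fun h d hd => ?_⟩
  · rw [weight_biWeight, Prod.ext_iff]
    exact h d (mem_support_iff.2 hd)
  · simpa [weight_biWeight, Prod.ext_iff] using h (mem_support_iff.1 hd)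

theorem C_mem_biDeg (a : k) : C a ∈ biDeg k 0 0 :=
  mem_biDeg_iff_isWeightedHomogeneous.2 (isWeightedHomogeneous_C _ a)

theorem X_two_mul_mem_biDeg {m n : ℕ} {f : MvPolynomial (Fin 4) k} (hf : f ∈ biDeg k m n) :
    X 2 * f ∈ biDeg k m (n + 1) := by
  rw [mem_biDeg_iff_isWeightedHomogeneous] at hf ⊢
  simpa [biWeight, add_comm] using (isWeightedHomogeneous_X k biWeight 2).mul hf

theorem X_three_mul_mem_biDeg {m n : ℕ} {f : MvPolynomial (Fin 4) k} (hf : f ∈ biDeg k m n) :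
    X 3 * f ∈ biDeg k m (n + 1) := by
  rw [mem_biDeg_iff_isWeightedHomogeneous] at hf ⊢
  simpa [biWeight, add_comm] using (isWeightedHomogeneous_X k biWeight 3).mul hf

theorem mem_biDeg_of_X_three_mul_mem {m n : ℕ} {f : MvPolynomial (Fin 4) k}
    (hf : X 3 * f ∈ biDeg k m (n + 1)) : f ∈ biDeg k m n := by
  rw [mem_biDeg_iff_isWeightedHomogeneous] at hf ⊢
  exact IsWeightedHomogeneous.of_X_mul (i := 3) (by simpa [biWeight, add_comm] using hf)

theorem span_eq_of_ideal_span_eq_of_mem_biDeg {ι ι' : Type*} [Fintype ι] [Fintype ι']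
    {m n : ℕ} {p : ι → MvPolynomial (Fin 4) k} {p' : ι' → MvPolynomial (Fin 4) k}
    (hp : ∀ i, p i ∈ biDeg k m n) (hp' : ∀ i, p' i ∈ biDeg k m n)
    (h : Ideal.span (Set.range p) = Ideal.span (Set.range p')) :
    Submodule.span k (Set.range p) = Submodule.span k (Set.range p') :=
  span_eq_of_ideal_span_eq_of_isWeightedHomogeneous biWeight_ne_zero
    (fun i => mem_biDeg_iff_isWeightedHomogeneous.1 (hp i))
    (fun i => mem_biDeg_iff_isWeightedHomogeneous.1 (hp' i)) h

theorem eq_C_mul_X_two_add_C_mul_X_three_of_mem_biDeg {f : MvPolynomial (Fin 4) k}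
    (hf : f ∈ biDeg k 0 1) :
    f = C (coeff (Finsupp.single 2 1) f) * X 2 + C (coeff (Finsupp.single 3 1) f) * X 3 := by
  have hsupp : f.support ⊆ {Finsupp.single 2 1, Finsupp.single 3 1} := by
    intro d hd
    obtain ⟨h01, h23⟩ := hf d hd
    have hd' : d = Finsupp.single 2 1 ∨ d = Finsupp.single 3 1 := by
      rcases (by omega : d 2 = 1 ∧ d 3 = 0 ∨ d 2 = 0 ∧ d 3 = 1) with ⟨h2, h3⟩ | ⟨h2, h3⟩
      · refine Or.inl (Finsupp.ext fun i => ?_)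
        fin_cases i <;> simp [h2, h3] <;> omega
      · refine Or.inr (Finsupp.ext fun i => ?_)
        fin_cases i <;> simp [h2, h3] <;> omega
    simpa using hd'
  have hne : (Finsupp.single 2 1 : Fin 4 →₀ ℕ) ≠ Finsupp.single 3 1 := by
    simp [Finsupp.single_eq_single_iff]
  conv_lhs => rw [f.as_sum, Finset.sum_subset hsupp fun d _ hd => by
    rw [notMem_support_iff.1 hd, map_zero]]
  rw [Finset.sum_pair hne, ← C_mul_X_eq_monomial, ← C_mul_X_eq_monomial]

theorem aeval_eq_self_of_mem_biDeg_zero {m : ℕ} {g : Fin 4 → MvPolynomial (Fin 4) k}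
    (hg₀ : g 0 = X 0) (hg₁ : g 1 = X 1) {f : MvPolynomial (Fin 4) k} (hf : f ∈ biDeg k m 0) :
    aeval g f = f := by
  refine aeval_eq_self_of_forall_mem_vars fun i hi => ?_
  obtain ⟨d, hd, hdi⟩ := (mem_vars_iff_mem_support i).1 hi
  have h23 := (hf d hd).2
  fin_cases i
  · exact hg₀
  · exact hg₁
  all_goals simp at hdi; omega

theorem mem_span_X_zero_X_one_of_mem_biDeg {m : ℕ} {f : MvPolynomial (Fin 4) k}
    (hf : f ∈ biDeg k (m + 1) 0) : f ∈ Ideal.span {X 0, X 1} := by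
  rw [← Set.image_pair, mem_ideal_span_X_image]
  intro d hd
  have h01 := (hf d hd).1
  by_cases h0 : d 0 = 0
  · exact ⟨1, by simp, by omega⟩
  · exact ⟨0, by simp, h0⟩

theorem eq_zero_of_X_two_mul_add_X_three_mul_eq_zero [IsDomain k] {m : ℕ}
    {A B : MvPolynomial (Fin 4) k} (hA : A ∈ biDeg k m 0) (h : X 2 * A + X 3 * B = 0) :
    A = 0 ∧ B = 0 := by
  have hA0 : A = 0 := by
    let g : Fin 4 → MvPolynomial (Fin 4) k := ![X 0, X 1, X 2, 0]
    have h' := congrArg (aeval g) h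
    rw [map_add, map_mul, map_mul, aeval_X, aeval_X,
      aeval_eq_self_of_mem_biDeg_zero (g := g) rfl rfl hA] at h'
    simpa [g] using h'
  subst hA0
  simpa using h

variable {ι : Type*}

def uvMultiples (q : ι → MvPolynomial (Fin 4) k) : Fin 2 × ι → MvPolynomial (Fin 4) k :=
  fun x => ![X 2, X 3] x.1 * q x.2

theorem uvMultiples_mem_biDeg {m : ℕ} {q : ι → MvPolynomial (Fin 4) k}
    (hq : ∀ i, q i ∈ biDeg k m 0) (x : Fin 2 × ι) : uvMultiples q x ∈ biDeg k m 1 := by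
  obtain ⟨e, i⟩ := x
  fin_cases e
  exacts [X_two_mul_mem_biDeg (hq i), X_three_mul_mem_biDeg (hq i)]

theorem ideal_span_range_uvMultiples (q : ι → MvPolynomial (Fin 4) k) :
    Ideal.span (Set.range (uvMultiples q)) = Ideal.span {X 2, X 3} * Ideal.span (Set.range q) := by
  rw [← Matrix.range_cons_cons_empty (X 2) (X 3) ![], Ideal.span_mul_span', ← Set.image2_mul,
    Set.image2_range]
  rfl

theorem linearIndependent_uvMultiples_iff [IsDomain k] [Fintype ι] {m : ℕ}
    {q : ι → MvPolynomial (Fin 4) k} (hq : ∀ i, q i ∈ biDeg k m 0) :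
    LinearIndependent k (uvMultiples q) ↔ LinearIndependent k q := by
  refine ⟨fun h => ?_, fun h => ?_⟩
  · have h2 : LinearIndependent k (uvMultiples q ∘ Prod.mk 0) :=
      h.comp _ (Prod.mk_right_injective 0)
    exact h2.of_comp (LinearMap.mulLeft k (X 2))
  · rw [Fintype.linearIndependent_iff] at h ⊢
    intro g hg
    have hsplit : X 2 * ∑ i, g (0, i) • q i + X 3 * ∑ i, g (1, i) • q i = 0 := by
      rw [← hg, Fintype.sum_prod_type, Fin.sum_univ_two, Finset.mul_sum, Finset.mul_sum]
      simp [uvMultiples]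
    have hmem : ∑ i, g (0, i) • q i ∈ biDeg k m 0 :=
      Submodule.sum_mem _ fun i _ => Submodule.smul_mem _ _ (hq i)
    obtain ⟨h0, h1⟩ := eq_zero_of_X_two_mul_add_X_three_mul_eq_zero hmem hsplit
    rintro ⟨e, i⟩
    fin_cases e
    exacts [h _ h0 i, h _ h1 i]

theorem span_X_two_X_three_inf_eq_mul [Fintype ι] {m : ℕ} {q : ι → MvPolynomial (Fin 4) k}
    (hq : ∀ i, q i ∈ biDeg k m 0) :
    Ideal.span {X 2, X 3} ⊓ Ideal.span (Set.range q) =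
      Ideal.span {X 2, X 3} * Ideal.span (Set.range q) := by
  classical
  refine le_antisymm ?_ Ideal.mul_le_inf
  rintro f ⟨hf23, hfq⟩
  rw [← Set.image_pair] at hf23 ⊢
  set φ := aeval (R := k) fun i : Fin 4 =>
    if i ∈ ({2, 3} : Set (Fin 4)) then (0 : MvPolynomial (Fin 4) k) else X i
  have hφf : φ f = 0 := by rwa [span_X_image_eq_ker] at hf23
  obtain ⟨c, rfl⟩ := Ideal.mem_span_range_iff_exists_fun.1 hfq
  -- `φ` kills `u, v` and fixes each `q i`, so subtracting `φ` of the sum changes nothing.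
  have hsum : ∑ i, c i * q i = ∑ i, (c i - φ (c i)) * q i := by
    have hφq : ∀ i, φ (q i) = q i := fun i =>
      aeval_eq_self_of_mem_biDeg_zero (by simp) (by simp) (hq i)
    simp only [sub_mul, Finset.sum_sub_distrib]
    rw [map_sum] at hφf
    simp only [map_mul, hφq] at hφf
    rw [hφf, sub_zero]
  rw [hsum]
  exact Ideal.sum_mem _ fun i _ => Ideal.mul_mem_mul (sub_aeval_mem_span_X_image _ _)
    (Ideal.subset_span ⟨i, rfl⟩)

theorem radical_span_pair_eq [IsDomain k] {I : Ideal (MvPolynomial (Fin 4) k)} {m : ℕ}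
    {q₁ q₂ : MvPolynomial (Fin 4) k} (hq₁ : q₁ ∈ biDeg k (m + 1) 0) (hq₂ : q₂ ∈ biDeg k (m + 1) 0)
    (hI : I ≤ Ideal.span {q₁, q₂})
    (hrad : I.radical = Ideal.span {X 0, X 1} ⊓ Ideal.span {X 2, X 3}) :
    (Ideal.span {q₁, q₂}).radical = Ideal.span {X 0, X 1} := by
  refine le_antisymm ?_ (Ideal.span_le.2 ?_)
  · have hprime : (Ideal.span {X 0, X 1} : Ideal (MvPolynomial (Fin 4) k)).IsPrime := by
      simpa [Set.image_pair] using isPrime_span_X_image (R := k) ({0, 1} : Set (Fin 4))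
    rw [← hprime.radical]
    refine Ideal.radical_mono (Ideal.span_le.2 ?_)
    rintro _ (rfl | rfl)
    exacts [mem_span_X_zero_X_one_of_mem_biDeg hq₁, mem_span_X_zero_X_one_of_mem_biDeg hq₂]
  -- setting `u = v = 1` fixes `q₁, q₂` and turns `(X i * u) ^ n` into `X i ^ n`
  let g : Fin 4 → MvPolynomial (Fin 4) k := ![X 0, X 1, 1, 1]
  have hX : ∀ i, i = 0 ∨ i = 1 → X i ∈ (Ideal.span {q₁, q₂}).radical := by
    intro i hi
    have hmem : X i * X 2 ∈ I.radical :=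
      hrad ▸ ⟨Ideal.mul_mem_right _ _ (Ideal.subset_span (by rcases hi with rfl | rfl <;> simp)),
        Ideal.mul_mem_left _ _ (Ideal.subset_span (by simp))⟩
    obtain ⟨n, hn⟩ := Ideal.radical_mono hI hmem
    obtain ⟨a, b, hab⟩ := Ideal.mem_span_pair.1 hn
    have hg := congrArg (aeval g) hab
    rw [map_add, map_mul, map_mul, aeval_eq_self_of_mem_biDeg_zero (g := g) rfl rfl hq₁,
      aeval_eq_self_of_mem_biDeg_zero (g := g) rfl rfl hq₂, map_pow, map_mul, aeval_X,
      aeval_X] at hg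
    have hgi : g i = X i := by rcases hi with rfl | rfl <;> rfl
    exact ⟨n, Ideal.mem_span_pair.2 ⟨_, _, hg.trans (by simp [g, hgi])⟩⟩
  rintro _ (rfl | rfl)
  exacts [hX 0 (Or.inl rfl), hX 1 (Or.inr rfl)]

end Bigraded

section Syzygies

variable {k : Type*} [CommRing k]

def colonForms (U : Submodule k (MvPolynomial (Fin 4) k)) : Submodule k (MvPolynomial (Fin 4) k) :=
  biDeg k 2 0 ⊓ U.comap (LinearMap.mulLeft k (X 2)) ⊓ U.comap (LinearMap.mulLeft k (X 3))

theorem mem_colonForms {U : Submodule k (MvPolynomial (Fin 4) k)} {q : MvPolynomial (Fin 4) k} :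
    q ∈ colonForms U ↔ q ∈ biDeg k 2 0 ∧ X 2 * q ∈ U ∧ X 3 * q ∈ U := by
  simp [colonForms, and_assoc]

theorem mem_Syz_iff {p ℓ : Fin 4 → MvPolynomial (Fin 4) k} {a b : ℕ} :
    ℓ ∈ Syz p a b ↔ (∀ i, ℓ i ∈ biDeg k a b) ∧ ∑ i, ℓ i * p i = 0 := by
  simp [Syz, syzMap]

variable (p : Fin 4 → MvPolynomial (Fin 4) k)

def syzLead : Syz p 0 1 →ₗ[k] MvPolynomial (Fin 4) k :=
  Fintype.linearCombination k p ∘ₗ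
    LinearMap.compLeft (lcoeff k (Finsupp.single 2 1)) (Fin 4) ∘ₗ (Syz p 0 1).subtype

theorem syzLead_apply (ℓ : Syz p 0 1) :
    syzLead p ℓ =
      ∑ i, coeff (Finsupp.single 2 1) ((ℓ : Fin 4 → MvPolynomial (Fin 4) k) i) • p i := by
  simp [syzLead, Fintype.linearCombination_apply]

variable {p} [IsDomain k]

theorem syzLead_injective (hli : LinearIndependent k p) : Function.Injective (syzLead p) := by
  rw [← LinearMap.ker_eq_bot, eq_bot_iff]
  rintro ⟨ℓ, hℓ⟩ hlead
  rw [LinearMap.mem_ker, syzLead_apply] at hlead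
  obtain ⟨hℓdeg, hsum⟩ := mem_Syz_iff.1 hℓ
  have hu : ∀ i, coeff (Finsupp.single 2 1) (ℓ i) = 0 := Fintype.linearIndependent_iff.1 hli _ hlead
  set β := fun i => coeff (Finsupp.single 3 1) (ℓ i)
  have hℓv : ∀ i, ℓ i = C (β i) * X 3 := fun i => by
    conv_lhs => rw [eq_C_mul_X_two_add_C_mul_X_three_of_mem_biDeg (hℓdeg i), hu i]
    simp [β]
  have hX3 : X 3 * ∑ i, β i • p i = 0 := by
    rw [← hsum, Finset.mul_sum]
    refine Finset.sum_congr rfl fun i _ => ?_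
    rw [hℓv i, smul_eq_C_mul]
    ring
  have hv := Fintype.linearIndependent_iff.1 hli _ ((mul_eq_zero.1 hX3).resolve_left (X_ne_zero 3))
  rw [Submodule.mem_bot, Submodule.mk_eq_zero]
  funext i
  rw [hℓv i, hv i, C_0, zero_mul, Pi.zero_apply]

theorem range_syzLead (hdeg : ∀ i, p i ∈ biDeg k 2 1) :
    LinearMap.range (syzLead p) =
      (colonForms (Submodule.span k (Set.range p))).map (LinearMap.mulLeft k (X 3)) := by
  have hmem : ∀ c : Fin 4 → k, ∑ i, c i • p i ∈ Submodule.span k (Set.range p) := fun c =>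
    Submodule.sum_mem _ fun i _ => Submodule.smul_mem _ _ (Submodule.subset_span ⟨i, rfl⟩)
  ext f
  constructor
  · rintro ⟨⟨ℓ, hℓ⟩, rfl⟩
    obtain ⟨hℓdeg, hsum⟩ := mem_Syz_iff.1 hℓ
    set P := ∑ i, coeff (Finsupp.single 2 1) (ℓ i) • p i
    set Q := ∑ i, coeff (Finsupp.single 3 1) (ℓ i) • p i
    have hPQ : X 2 * P + X 3 * Q = 0 := by
      rw [← hsum, Finset.mul_sum, Finset.mul_sum, ← Finset.sum_add_distrib]
      refine Finset.sum_congr rfl fun i _ => ?_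
      conv_rhs => rw [eq_C_mul_X_two_add_C_mul_X_three_of_mem_biDeg (hℓdeg i)]
      rw [smul_eq_C_mul, smul_eq_C_mul]
      ring
    obtain ⟨w, hP, hQ⟩ := exists_eq_X_mul_of_X_mul_add_X_mul_eq_zero_s5 (by decide) hPQ
    have hPdeg : P ∈ biDeg k 2 1 := Submodule.sum_mem _ fun i _ => Submodule.smul_mem _ _ (hdeg i)
    refine ⟨w, mem_colonForms.2 ⟨mem_biDeg_of_X_three_mul_mem (hP ▸ hPdeg), ?_, hP ▸ hmem _⟩,
      hP.symm⟩
    rw [← neg_neg (X 2 * w), ← hQ]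
    exact neg_mem (hmem _)
  · rintro ⟨q, hq, rfl⟩
    obtain ⟨-, hu, hv⟩ := mem_colonForms.1 hq
    obtain ⟨c, hc⟩ := (Submodule.mem_span_range_iff_exists_fun k).1 hv
    obtain ⟨d, hd⟩ := (Submodule.mem_span_range_iff_exists_fun k).1 hu
    -- the Koszul syzygy `v • (u q) - u • (v q) = 0`, written in the coordinates `c`, `d`
    let ℓ : Fin 4 → MvPolynomial (Fin 4) k := fun i => C (c i) * X 2 - C (d i) * X 3
    have hℓ : ℓ ∈ Syz p 0 1 := by
      refine mem_Syz_iff.2 ⟨fun i => sub_mem ?_ ?_, ?_⟩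
      · simpa [mul_comm] using X_two_mul_mem_biDeg (C_mem_biDeg (c i))
      · simpa [mul_comm] using X_three_mul_mem_biDeg (C_mem_biDeg (d i))
      · have hexp : ∑ i, ℓ i * p i = X 2 * ∑ i, c i • p i - X 3 * ∑ i, d i • p i := by
          rw [Finset.mul_sum, Finset.mul_sum, ← Finset.sum_sub_distrib]
          refine Finset.sum_congr rfl fun i _ => ?_
          rw [smul_eq_C_mul, smul_eq_C_mul]
          ring
        rw [hexp, hc, hd]
        ring
    refine ⟨⟨ℓ, hℓ⟩, ?_⟩
    rw [syzLead_apply, LinearMap.mulLeft_apply, ← hc]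
    refine Finset.sum_congr rfl fun i _ => ?_
    simp [ℓ, coeff_X, Finsupp.single_eq_single_iff]

theorem rank_syz_eq_rank_colonForms (hli : LinearIndependent k p)
    (hdeg : ∀ i, p i ∈ biDeg k 2 1) :
    Module.rank k (Syz p 0 1) = Module.rank k (colonForms (Submodule.span k (Set.range p))) :=
  ((LinearEquiv.ofInjective _ (syzLead_injective hli)).trans
      (LinearEquiv.ofEq _ _ (range_syzLead hdeg))).rank_eq.trans
    (Submodule.equivMapOfInjective _ (mul_right_injective₀ (X_ne_zero 3)) _).rank_eq.symm

end Syzygies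

theorem ideal_span_eq_inf_iff {k : Type*} [Field k] {p : Fin 4 → MvPolynomial (Fin 4) k}
    (hli : LinearIndependent k p) (hdeg : ∀ i, p i ∈ biDeg k 2 1)
    {q₁ q₂ : MvPolynomial (Fin 4) k} (hq₁ : q₁ ∈ biDeg k 2 0) (hq₂ : q₂ ∈ biDeg k 2 0) :
    Ideal.span (Set.range p) = Ideal.span {X 2, X 3} ⊓ Ideal.span {q₁, q₂} ↔
      q₁ ∈ colonForms (Submodule.span k (Set.range p)) ∧
        q₂ ∈ colonForms (Submodule.span k (Set.range p)) ∧ LinearIndependent k ![q₁, q₂] := by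
  set q : Fin 2 → MvPolynomial (Fin 4) k := ![q₁, q₂]
  have hq : ∀ i, q i ∈ biDeg k 2 0 := Fin.forall_fin_two.2 ⟨hq₁, hq₂⟩
  have hcolon : Set.range (uvMultiples q) ⊆ Submodule.span k (Set.range p) ↔
      q₁ ∈ colonForms (Submodule.span k (Set.range p)) ∧
        q₂ ∈ colonForms (Submodule.span k (Set.range p)) := by
    simp only [Set.range_subset_iff, Prod.forall, Fin.forall_fin_two, uvMultiples, q,
      Matrix.cons_val_zero, Matrix.cons_val_one, SetLike.mem_coe, mem_colonForms, hq₁, hq₂,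
      true_and]
    tauto
  have hfinrank : Module.finrank k (Submodule.span k (Set.range p)) =
      Fintype.card (Fin 2 × Fin 2) := finrank_span_eq_card hli
  rw [← Matrix.range_cons_cons_empty q₁ q₂ ![], span_X_two_X_three_inf_eq_mul hq,
    ← ideal_span_range_uvMultiples, ← and_assoc, ← hcolon,
    ← linearIndependent_uvMultiples_iff hq]
  constructor
  · intro h
    have hspan := span_eq_of_ideal_span_eq_of_mem_biDeg hdeg (uvMultiples_mem_biDeg hq) h
    refine ⟨hspan ▸ Submodule.subset_span, linearIndependent_iff_card_eq_finrank_span.2 ?_⟩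
    rw [Set.finrank, ← hspan, hfinrank]
  · rintro ⟨hsub, hind⟩
    have : FiniteDimensional k (Submodule.span k (Set.range p)) :=
      .span_of_finite k (Set.finite_range p)
    have hspan : Submodule.span k (Set.range (uvMultiples q)) = Submodule.span k (Set.range p) :=
      Submodule.eq_of_le_of_finrank_eq (Submodule.span_le.2 hsub)
        (by rw [finrank_span_eq_card hind, hfinrank])
    simp only [Ideal.span]
    rw [← Submodule.span_span_of_tower k _ (Set.range p), ← hspan, Submodule.span_span_of_tower]

theorem statement5_general {k : Type*} [Field k]
    (p : Fin 4 → MvPolynomial (Fin 4) k)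
    (hli : LinearIndependent k p)
    (hdeg : ∀ i, p i ∈ biDeg k 2 1)
    (hbpf : (Ideal.span (Set.range p)).radical =
      Ideal.span {X 0, X 1} ⊓ Ideal.span {X 2, X 3}) :
    2 ≤ Module.rank k ↥(Syz p 0 1) ↔
      ∃ q₁ q₂ : MvPolynomial (Fin 4) k, q₁ ∈ biDeg k 2 0 ∧ q₂ ∈ biDeg k 2 0 ∧
        (Ideal.span {q₁, q₂}).radical = Ideal.span {X 0, X 1} ∧
        Ideal.span (Set.range p) = Ideal.span {X 2, X 3} ⊓ Ideal.span {q₁, q₂} := by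
  rw [rank_syz_eq_rank_colonForms hli hdeg, two_le_rank_iff_exists_linearIndependent_pair]
  constructor
  · rintro ⟨q₁, q₂, h₁, h₂, hind⟩
    have hq₁ := (mem_colonForms.1 h₁).1
    have hq₂ := (mem_colonForms.1 h₂).1
    have hI := (ideal_span_eq_inf_iff hli hdeg hq₁ hq₂).2 ⟨h₁, h₂, hind⟩
    exact ⟨q₁, q₂, hq₁, hq₂, radical_span_pair_eq hq₁ hq₂ (hI ▸ inf_le_right) hbpf, hI⟩
  · rintro ⟨q₁, q₂, hq₁, hq₂, -, hI⟩
    exact ⟨q₁, q₂, (ideal_span_eq_inf_iff hli hdeg hq₁ hq₂).1 hI⟩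

/-- For U basepoint free, dim Syz_{(0,1)} ≥ 2 iff
I_U = ⟨u,v⟩ ∩ ⟨q₁,q₂⟩ with q₁, q₂ of bidegree (2,0) and √⟨q₁,q₂⟩ = ⟨s,t⟩. -/
theorem statement5 {k : Type*} [Field k] [IsAlgClosed k]
    (p : Fin 4 → MvPolynomial (Fin 4) k)
    (hli : LinearIndependent k p)
    (hdeg : ∀ i, p i ∈ biDeg k 2 1)
    (hbpf : (Ideal.span (Set.range p)).radical =
      Ideal.span {X 0, X 1} ⊓ Ideal.span {X 2, X 3}) :
    2 ≤ Module.rank k ↥(Syz p 0 1) ↔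
      ∃ q₁ q₂ : MvPolynomial (Fin 4) k, q₁ ∈ biDeg k 2 0 ∧ q₂ ∈ biDeg k 2 0 ∧
        (Ideal.span {q₁, q₂}).radical = Ideal.span {X 0, X 1} ∧
        Ideal.span (Set.range p) = Ideal.span {X 2, X 3} ⊓ Ideal.span {q₁, q₂} :=
  statement5_general p hli hdeg hbpf
end
end

section
/- If U is basepoint free, then every associated prime of the R-module R/I_U is one of the following: ⟨s,t⟩; ⟨u,v⟩; ⟨s,t,au+bv⟩ for some (a,b) ∈ k² \ {(0,0)}; ⟨u,v,as+bt⟩ for some (a,b) ∈ k² \ {(0,0)}; or the maximal ideal ⟨s,t,u,v⟩. -/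
open MvPolynomial

noncomputable section

/-!
An associated prime `P` of `R ⧸ I_U` has the form `I_U : x`. Since `I_U` is homogeneous for both
the `(s,t)`-degree and the `(u,v)`-degree, so is `P`: if `f x ∈ I_U`, a power of the top component
of `f` kills `x` as well, and primality lets one peel off the components of `f` one at a time.
As `P ⊇ I_U`, `P` contains `√I_U = ⟨s,t⟩ ∩ ⟨u,v⟩ ⊇ ⟨s,t⟩⟨u,v⟩`, hence `⟨s,t⟩` or `⟨u,v⟩`; say
`⟨s,t⟩`. Then `P` is the preimage of a homogeneous prime `Q` of `k[u,v]`. If `Q ≠ 0`, it contains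
a binary form, which over an algebraically closed field is a product of linear forms, so `Q`
contains a linear form `ℓ`. If `Q ≠ ⟨ℓ⟩`, reducing an element of `Q ∖ ⟨ℓ⟩` modulo `ℓ` gives a
polynomial in a complementary linear form `m` lying in `Q`, whose homogeneous components force
`m ∈ Q`; then `Q = ⟨u,v⟩`.
-/

theorem Ideal.exists_eq_colon_of_mem_associatedPrimes {R : Type*} [CommRing R] [IsNoetherianRing R]
    {I P : Ideal R} (hP : P ∈ associatedPrimes R (R ⧸ I)) : ∃ x, P = I.colon {x} := by
  obtain ⟨-, x, hx⟩ := isAssociatedPrime_iff.mp hP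
  obtain ⟨x, rfl⟩ := Ideal.Quotient.mk_surjective x
  refine ⟨x, hx.trans (Submodule.ext fun r ↦ ?_)⟩
  simp [Submodule.mem_colon_singleton, Algebra.smul_def, ← map_mul, Ideal.Quotient.eq_zero_iff_mem]

theorem Ideal.le_of_mem_associatedPrimes_quotient {R : Type*} [CommRing R] [IsNoetherianRing R]
    {I P : Ideal R} (hP : P ∈ associatedPrimes R (R ⧸ I)) : I ≤ P := by
  obtain ⟨x, rfl⟩ := Ideal.exists_eq_colon_of_mem_associatedPrimes hP
  exact Ideal.le_colon

theorem Ideal.eq_sup_span_image_of_map_eq_span {A B : Type*} [CommRing A] [CommRing B]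
    {φ : A →+* B} {ι : B →+* A} (hφι : ∀ b, φ (ι b) = b) {P : Ideal A}
    (hP : RingHom.ker φ ≤ P) {S : Set B} (hS : P.map φ = Ideal.span S) :
    P = RingHom.ker φ ⊔ Ideal.span (ι '' S) := by
  have hsurj : Function.Surjective φ := fun b ↦ ⟨ι b, hφι b⟩
  have hS' : Ideal.span S = (Ideal.span (ι '' S)).map φ := by
    rw [Ideal.map_span, Set.image_image]; simp only [hφι, Set.image_id']
  rw [← sup_eq_left.mpr hP, ← Ideal.comap_map_of_surjective' φ hsurj, hS, hS',
    Ideal.comap_map_of_surjective' φ hsurj, sup_comm]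

namespace MvPolynomial

section WeightedComponents

variable {σ R : Type*} [CommRing R] {w : σ → ℕ}

attribute [local instance] weightedGradedAlgebra

theorem isHomogeneous_iff_weightedHomogeneousComponent_mem {I : Ideal (MvPolynomial σ R)} :
    I.IsHomogeneous (weightedHomogeneousSubmodule R w) ↔
      ∀ p ∈ I, ∀ n, weightedHomogeneousComponent w n p ∈ I := by
  refine ⟨fun h p hp n ↦ weightedHomogeneousComponent_mem_of_mem R w h hp n, fun h n p hp ↦ ?_⟩
  exact (decompose'_apply R w p n).symm ▸ h p hp n

theorem exists_weight_eq_add_of_mem_support_mul {p q : MvPolynomial σ R} {d : σ →₀ ℕ}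
    (hd : d ∈ (p * q).support) :
    ∃ a ∈ p.support, ∃ b ∈ q.support,
      Finsupp.weight w d = Finsupp.weight w a + Finsupp.weight w b := by
  classical
  obtain ⟨a, ha, b, hb, rfl⟩ := Finset.mem_add.mp (support_mul p q hd)
  exact ⟨a, ha, b, hb, map_add _ a b⟩

theorem mem_support_sub_weightedHomogeneousComponent {p : MvPolynomial σ R} {n : ℕ}
    {d : σ →₀ ℕ} :
    d ∈ (p - weightedHomogeneousComponent w n p).support ↔
      d ∈ p.support ∧ Finsupp.weight w d ≠ n := by
  rw [mem_support_iff, coeff_sub, coeff_weightedHomogeneousComponent, mem_support_iff]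
  split_ifs with h <;> simp [h]

theorem weightedHomogeneousComponent_mul_of_le {f g : MvPolynomial σ R} {m n : ℕ}
    (hf : ∀ d ∈ f.support, Finsupp.weight w d ≤ m)
    (hg : ∀ d ∈ g.support, Finsupp.weight w d ≤ n) :
    weightedHomogeneousComponent w (m + n) (f * g) =
      weightedHomogeneousComponent w m f * weightedHomogeneousComponent w n g := by
  set fm := weightedHomogeneousComponent w m f
  set gn := weightedHomogeneousComponent w n g
  have hfm : IsWeightedHomogeneous w fm m := weightedHomogeneousComponent_isWeightedHomogeneous m f
  have hgn : IsWeightedHomogeneous w gn n := weightedHomogeneousComponent_isWeightedHomogeneous n g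
  have h₁ : weightedHomogeneousComponent w (m + n) ((f - fm) * g) = 0 := by
    refine weightedHomogeneousComponent_eq_zero' _ _ fun d hd ↦ ?_
    obtain ⟨a, ha, b, hb, hab⟩ := exists_weight_eq_add_of_mem_support_mul (w := w) hd
    obtain ⟨ha, ha'⟩ := mem_support_sub_weightedHomogeneousComponent.mp ha
    have := hf a ha; have := hg b hb; omega
  have h₂ : weightedHomogeneousComponent w (m + n) (fm * (g - gn)) = 0 := by
    refine weightedHomogeneousComponent_eq_zero' _ _ fun d hd ↦ ?_
    obtain ⟨a, ha, b, hb, hab⟩ := exists_weight_eq_add_of_mem_support_mul (w := w) hd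
    obtain ⟨hb, hb'⟩ := mem_support_sub_weightedHomogeneousComponent.mp hb
    have := hfm (mem_support_iff.mp ha); have := hg b hb; omega
  rw [show f * g = fm * gn + ((f - fm) * g + fm * (g - gn)) by ring, map_add, map_add, h₁, h₂,
    (hfm.mul hgn).weightedHomogeneousComponent_same, add_zero, add_zero]

theorem exists_pow_weightedHomogeneousComponent_mul_mem {I : Ideal (MvPolynomial σ R)}
    (hI : I.IsHomogeneous (weightedHomogeneousSubmodule R w)) {f x : MvPolynomial σ R} {n : ℕ}
    (hf : ∀ d ∈ f.support, Finsupp.weight w d ≤ n) (hfx : f * x ∈ I) :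
    ∃ N, weightedHomogeneousComponent w n f ^ N * x ∈ I := by
  set fn := weightedHomogeneousComponent w n f
  have hfn : IsWeightedHomogeneous w fn n := weightedHomogeneousComponent_isWeightedHomogeneous n f
  -- multiplying by `fn` shifts weights by `n`, so induct on the width of an interval `[a, a + l)`
  -- containing the weights of `x`
  suffices H : ∀ l a x, (∀ d ∈ x.support, Finsupp.weight w d ∈ Set.Ico a (a + l)) →
      f * x ∈ I → ∃ N, fn ^ N * x ∈ I from
    H (weightedTotalDegree w x + 1) 0 x (fun d hd ↦
      ⟨Nat.zero_le _, by simpa using Nat.lt_add_one_of_le (le_weightedTotalDegree w hd)⟩) hfx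
  intro l
  induction l with
  | zero =>
    refine fun a x hx _ ↦ ⟨0, ?_⟩
    rw [show x = 0 from support_eq_empty.mp (Finset.eq_empty_of_forall_notMem
      fun d hd ↦ by simpa using hx d hd)]
    simp
  | succ l ih =>
    intro a x hx hfx
    set xt := weightedHomogeneousComponent w (a + l) x
    have htop : fn * xt ∈ I := by
      have hxl : ∀ d ∈ x.support, Finsupp.weight w d ≤ a + l := fun d hd ↦ by
        have := (hx d hd).2; omega
      rw [← weightedHomogeneousComponent_mul_of_le hf hxl]
      exact (isHomogeneous_iff_weightedHomogeneousComponent_mem.mp hI) _ hfx _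
    have hy : ∀ d ∈ (fn * (x - xt)).support, Finsupp.weight w d ∈ Set.Ico (n + a) (n + a + l) := by
      intro d hd
      obtain ⟨b, hb, c, hc, hbc⟩ := exists_weight_eq_add_of_mem_support_mul (w := w) hd
      obtain ⟨hc, hc'⟩ := mem_support_sub_weightedHomogeneousComponent.mp hc
      have := hfn (mem_support_iff.mp hb); have := hx c hc
      simp only [Set.mem_Ico] at this ⊢; omega
    have hfy : f * (fn * (x - xt)) ∈ I := by
      rw [show f * (fn * (x - xt)) = fn * (f * x) - f * (fn * xt) by ring]
      exact sub_mem (I.mul_mem_left _ hfx) (I.mul_mem_left _ htop)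
    obtain ⟨N, hN⟩ := ih (n + a) _ hy hfy
    refine ⟨N + 1, ?_⟩
    rw [show fn ^ (N + 1) * x = fn ^ N * (fn * (x - xt)) + fn ^ N * (fn * xt) by ring]
    exact add_mem hN (I.mul_mem_left _ htop)

theorem isHomogeneous_colon_singleton_of_isPrime {I : Ideal (MvPolynomial σ R)}
    (hI : I.IsHomogeneous (weightedHomogeneousSubmodule R w)) {x : MvPolynomial σ R}
    (hP : (I.colon {x}).IsPrime) :
    (I.colon {x}).IsHomogeneous (weightedHomogeneousSubmodule R w) := by
  rw [isHomogeneous_iff_weightedHomogeneousComponent_mem]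
  -- induction on a strict upper bound for the weights of `f`, peeling off the top component
  suffices H : ∀ n, ∀ f ∈ I.colon {x}, (∀ d ∈ f.support, Finsupp.weight w d < n) →
      ∀ m, weightedHomogeneousComponent w m f ∈ I.colon {x} from
    fun f hf ↦ H _ f hf fun d hd ↦ Nat.lt_add_one_of_le (le_weightedTotalDegree w hd)
  intro n
  induction n with
  | zero =>
    intro f _ hf m
    rw [show f = 0 from support_eq_empty.mp (Finset.eq_empty_of_forall_notMem
      fun d hd ↦ by simpa using hf d hd)]
    simp
  | succ n ih =>
    intro f hf hfn m
    set fn := weightedHomogeneousComponent w n f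
    have hfnP : fn ∈ I.colon {x} := by
      obtain ⟨N, hN⟩ := exists_pow_weightedHomogeneousComponent_mul_mem hI
        (fun d hd ↦ Nat.le_of_lt_add_one (hfn d hd)) (Submodule.mem_colon_singleton.mp hf)
      exact hP.mem_of_pow_mem N (Submodule.mem_colon_singleton.mpr hN)
    have hrest := ih (f - fn) (sub_mem hf hfnP) fun d hd ↦ by
      obtain ⟨hd, hd'⟩ := mem_support_sub_weightedHomogeneousComponent.mp hd
      have := hfn d hd; omega
    rw [show weightedHomogeneousComponent w m f =
      weightedHomogeneousComponent w m (f - fn) + weightedHomogeneousComponent w m fn by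
        rw [← map_add, sub_add_cancel]]
    refine add_mem (hrest m) ?_
    rw [weightedHomogeneousComponent_of_mem (weightedHomogeneousComponent_mem w f n)]
    split_ifs
    exacts [hfnP, zero_mem _]

theorem isHomogeneous_span_of_le {S : Submodule R (MvPolynomial σ R)} {n : ℕ}
    (hS : S ≤ weightedHomogeneousSubmodule R w n) :
    (Ideal.span (S : Set (MvPolynomial σ R))).IsHomogeneous (weightedHomogeneousSubmodule R w) :=
  Ideal.homogeneous_span _ _ fun _ hp ↦ ⟨n, hS hp⟩

theorem isHomogeneous_of_mem_associatedPrimes [Finite σ] [IsNoetherianRing R]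
    {I P : Ideal (MvPolynomial σ R)} (hI : I.IsHomogeneous (weightedHomogeneousSubmodule R w))
    (hP : P ∈ associatedPrimes (MvPolynomial σ R) (MvPolynomial σ R ⧸ I)) :
    P.IsHomogeneous (weightedHomogeneousSubmodule R w) := by
  obtain ⟨x, rfl⟩ := Ideal.exists_eq_colon_of_mem_associatedPrimes hP
  exact isHomogeneous_colon_singleton_of_isPrime hI hP.isPrime

end WeightedComponents

theorem aeval_weightedHomogeneousComponent {σ τ R : Type*} [CommRing R] {w : σ → ℕ} {v : τ → ℕ}
    {g : σ → MvPolynomial τ R} (hg : ∀ i, IsWeightedHomogeneous v (g i) (w i)) (n : ℕ)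
    (p : MvPolynomial σ R) :
    aeval g (weightedHomogeneousComponent w n p) =
      weightedHomogeneousComponent v n (aeval g p) := by
  induction p using MvPolynomial.induction_on' with
  | add p q hp hq => simp only [map_add, hp, hq]
  | monomial d c =>
    have hd : IsWeightedHomogeneous v (aeval g (monomial d c)) (Finsupp.weight w d) := by
      rw [aeval_monomial, Finsupp.weight_apply, algebraMap_eq, Finsupp.prod, Finsupp.sum]
      exact (IsWeightedHomogeneous.prod _ _ _ fun i _ ↦ (hg i).pow (d i)).C_mul c
    by_cases h : Finsupp.weight w d = n
    · subst h
      rw [(isWeightedHomogeneous_monomial w d c rfl).weightedHomogeneousComponent_same,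
        hd.weightedHomogeneousComponent_same]
    · rw [(isWeightedHomogeneous_monomial w d c rfl).weightedHomogeneousComponent_ne n (Ne.symm h),
        hd.weightedHomogeneousComponent_ne n (Ne.symm h), map_zero]

theorem sub_mem_of_forall_X_sub_mem {σ R : Type*} [CommRing R]
    (φ : MvPolynomial σ R →ₐ[R] MvPolynomial σ R) {J : Ideal (MvPolynomial σ R)}
    (h : ∀ i, X i - φ (X i) ∈ J) (p : MvPolynomial σ R) : p - φ p ∈ J := by
  have : (Ideal.Quotient.mkₐ R J).comp φ = Ideal.Quotient.mkₐ R J :=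
    algHom_ext fun i ↦ (Ideal.Quotient.eq.mpr (h i)).symm
  exact Ideal.Quotient.eq.mp (congrArg (· p) this).symm

variable {k : Type*} [Field k]

theorem eq_zero_of_C_mem {σ : Type*} {Q : Ideal (MvPolynomial σ k)} (hQ : Q ≠ ⊤) {c : k}
    (h : C c ∈ Q) : c = 0 := by
  by_contra hc
  exact hQ (Q.eq_top_of_isUnit_mem h ((Ne.isUnit hc).map C))

theorem ker_constantCoeff {σ : Type*} :
    RingHom.ker (constantCoeff : MvPolynomial σ k →+* k) = idealOfVars σ k := by
  refine le_antisymm (fun p hp ↦ ?_) (Ideal.span_le.mpr ?_)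
  · have := sub_mem_of_forall_X_sub_mem (aeval fun _ ↦ (0 : MvPolynomial σ k))
      (J := idealOfVars σ k) (fun i ↦ by
        rw [aeval_X, sub_zero]; exact Ideal.subset_span (Set.mem_range_self i)) p
    rwa [aeval_zero', RingHom.mem_ker.mp hp, map_zero, sub_zero] at this
  · rintro _ ⟨i, rfl⟩
    exact constantCoeff_X k i

theorem isMaximal_idealOfVars {σ : Type*} : (idealOfVars σ k).IsMaximal := by
  rw [← ker_constantCoeff]
  exact RingHom.ker_isMaximal_of_surjective _ fun c ↦ ⟨C c, constantCoeff_C σ c⟩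

theorem ker_aeval_eq_of_forall_X_sub_mem {σ τ : Type*} {g : σ → MvPolynomial τ k}
    {ι : MvPolynomial τ k →ₐ[k] MvPolynomial σ k} {J : Ideal (MvPolynomial σ k)}
    (hJ : J ≤ RingHom.ker (aeval g)) (h : ∀ i, X i - ι (g i) ∈ J) : RingHom.ker (aeval g) = J :=
  le_antisymm (fun p hp ↦ by
    have := sub_mem_of_forall_X_sub_mem (ι.comp (aeval g)) (J := J)
      (fun i ↦ by rw [AlgHom.comp_apply, aeval_X]; exact h i) p
    rwa [AlgHom.comp_apply, RingHom.mem_ker.mp hp, map_zero, sub_zero] at this) hJ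

section BinaryForms

theorem natDegree_aeval_X_one_le {q : MvPolynomial (Fin 2) k} {n : ℕ} (hq : q.IsHomogeneous n) :
    (MvPolynomial.aeval (![Polynomial.X, 1] : Fin 2 → Polynomial k) q).natDegree ≤ n := by
  rw [q.as_sum, map_sum]
  refine Polynomial.natDegree_sum_le_of_forall_le _ _ fun d hd ↦ ?_
  have hdn : d 0 + d 1 = n := by
    simpa [Finsupp.weight_apply, Finsupp.sum_fintype, Fin.sum_univ_two] using
      hq (mem_support_iff.mp hd)
  rw [aeval_monomial, Finsupp.prod_fintype _ _ (by simp), Fin.prod_univ_two]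
  simp only [Matrix.cons_val_zero, Matrix.cons_val_one, one_pow, mul_one]
  exact (Polynomial.natDegree_C_mul_X_pow_le _ _).trans (by omega)

theorem IsHomogeneous.exists_eq_linear_mul [IsAlgClosed k] {q : MvPolynomial (Fin 2) k} {n : ℕ}
    (hq : q.IsHomogeneous (n + 1)) :
    ∃ a b : k, ¬(a = 0 ∧ b = 0) ∧ ∃ h : MvPolynomial (Fin 2) k, h.IsHomogeneous n ∧
      q = (C a * X 0 + C b * X 1) * h := by
  set p := MvPolynomial.aeval (![Polynomial.X, 1] : Fin 2 → Polynomial k) q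
  have hq' : q = p.homogenize (n + 1) := (Polynomial.homogenize_eq_of_isHomogeneous hq rfl).symm
  by_cases hp : p.natDegree = 0
  · obtain ⟨c, hc⟩ : ∃ c, p = Polynomial.C c := ⟨_, Polynomial.eq_C_of_natDegree_eq_zero hp⟩
    refine ⟨0, 1, by simp, C c * X 1 ^ n, (isHomogeneous_X_pow 1 n).C_mul _, ?_⟩
    rw [hq', hc, Polynomial.homogenize_C]
    simp only [map_zero, map_one, zero_mul, one_mul, zero_add]
    ring
  -- dehomogenize, split off a root, and homogenize again
  obtain ⟨r, hr⟩ := IsAlgClosed.exists_root p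
    (Polynomial.natDegree_pos_iff_degree_pos.mp (Nat.pos_of_ne_zero hp)).ne'
  obtain ⟨p', hp'⟩ := Polynomial.dvd_iff_isRoot.mpr hr
  have hdeg : p'.natDegree ≤ n := by
    have hp'0 : p' ≠ 0 := by rintro rfl; simp_all
    have : p.natDegree ≤ n + 1 := natDegree_aeval_X_one_le hq
    rw [hp', Polynomial.natDegree_mul (Polynomial.X_sub_C_ne_zero r) hp'0,
      Polynomial.natDegree_X_sub_C] at this
    omega
  refine ⟨1, -r, by simp, p'.homogenize n, Polynomial.isHomogeneous_homogenize _, ?_⟩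
  rw [hq', hp', add_comm n, Polynomial.homogenize_mul _ _ (Polynomial.natDegree_X_sub_C r).le hdeg]
  simp [Polynomial.homogenize_X, Polynomial.homogenize_C, sub_eq_add_neg]

theorem exists_linear_mem_of_isHomogeneous_mem [IsAlgClosed k]
    {Q : Ideal (MvPolynomial (Fin 2) k)} (hQ : Q.IsPrime) {q : MvPolynomial (Fin 2) k} {n : ℕ}
    (hq : q.IsHomogeneous n) (hq0 : q ≠ 0) (hqQ : q ∈ Q) :
    ∃ a b : k, ¬(a = 0 ∧ b = 0) ∧ C a * X 0 + C b * X 1 ∈ Q := by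
  induction n generalizing q with
  | zero =>
    have hC := totalDegree_eq_zero_iff_eq_C.mp (hq.totalDegree hq0)
    rw [hC] at hq0 hqQ
    exact absurd (eq_zero_of_C_mem hQ.ne_top hqQ) (by simpa using hq0)
  | succ n ih =>
    obtain ⟨a, b, hab, h, hh, rfl⟩ := hq.exists_eq_linear_mul
    rcases hQ.mem_or_mem hqQ with hℓ | hhQ
    · exact ⟨a, b, hab, hℓ⟩
    · exact ih hh (right_ne_zero_of_mul hq0) hhQ

attribute [local instance] gradedAlgebra

theorem mem_of_aeval_mem_of_isHomogeneous {σ : Type*} {Q : Ideal (MvPolynomial σ k)}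
    (hQ : Q.IsPrime) (hQh : Q.IsHomogeneous (homogeneousSubmodule σ k)) {m : MvPolynomial σ k}
    (hm : m.IsHomogeneous 1) {g : Polynomial k} (hg : 0 < g.natDegree)
    (hgQ : Polynomial.aeval m g ∈ Q) : m ∈ Q := by
  have htop : homogeneousComponent g.natDegree (Polynomial.aeval m g) =
      C g.leadingCoeff * m ^ g.natDegree := by
    rw [Polynomial.aeval_eq_sum_range, map_sum, Finset.sum_eq_single_of_mem _
      (Finset.self_mem_range_succ _) fun i _ hi ↦ ?_]
    · rw [map_smul, homogeneousComponent_of_mem (by simpa using hm.pow g.natDegree), if_pos rfl,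
        smul_eq_C_mul, Polynomial.leadingCoeff]
    · rw [map_smul, homogeneousComponent_of_mem (by simpa using hm.pow i), if_neg (Ne.symm hi),
        smul_zero]
  have hmem := homogeneousComponent_mem_of_mem hQh hgQ g.natDegree
  rw [htop] at hmem
  rcases hQ.mem_or_mem hmem with hc | hpow
  · exact absurd (eq_zero_of_C_mem hQ.ne_top hc)
      (Polynomial.leadingCoeff_ne_zero.mpr (Polynomial.ne_zero_of_natDegree_gt hg))
  · exact hQ.mem_of_pow_mem _ hpow

theorem span_X_le_of_linear_mem {Q : Ideal (MvPolynomial (Fin 2) k)} (hQ : Q.IsPrime)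
    (hQh : Q.IsHomogeneous (homogeneousSubmodule (Fin 2) k)) {a b : k} (hab : ¬(a = 0 ∧ b = 0))
    (hℓQ : C a * X 0 + C b * X 1 ∈ Q) (hQℓ : ¬Q ≤ Ideal.span {C a * X 0 + C b * X 1}) :
    Ideal.span {X 0, X 1} ≤ Q := by
  set ℓ : MvPolynomial (Fin 2) k := C a * X 0 + C b * X 1
  -- complete `ℓ` to a basis `ℓ, m` of the linear forms
  obtain ⟨x, y, hxy⟩ : ∃ x y : k, a * y - b * x = 1 := by
    by_cases ha : a = 0
    · have hb : b ≠ 0 := fun hb ↦ hab ⟨ha, hb⟩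
      exact ⟨-b⁻¹, 0, by field_simp; simp [ha]⟩
    · exact ⟨0, a⁻¹, by field_simp; ring⟩
  set m : MvPolynomial (Fin 2) k := C x * X 0 + C y * X 1
  have hxy' : C a * C y - C b * C x = (1 : MvPolynomial (Fin 2) k) := by
    rw [← map_mul, ← map_mul, ← map_sub, hxy, map_one]
  have hX0 : X 0 = C y * ℓ - C b * m := by linear_combination (-X 0) * hxy'
  have hX1 : X 1 = C a * m - C x * ℓ := by linear_combination (-X 1) * hxy'
  -- reduce modulo `ℓ` to a polynomial in `m`
  set ψ : MvPolynomial (Fin 2) k →ₐ[k] MvPolynomial (Fin 2) k := (Polynomial.aeval m).comp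
    (aeval ![Polynomial.C (-b) * Polynomial.X, Polynomial.C a * Polynomial.X])
  have hψ : ∀ p, p - ψ p ∈ Ideal.span {ℓ} := sub_mem_of_forall_X_sub_mem ψ fun i ↦ by
    refine Ideal.mem_span_singleton'.mpr ?_
    fin_cases i
    · refine ⟨C y, ?_⟩
      simp only [ψ, AlgHom.comp_apply, aeval_X]
      simp [algebraMap_eq]
      linear_combination -hX0
    · refine ⟨-C x, ?_⟩
      simp only [ψ, AlgHom.comp_apply, aeval_X]
      simp [algebraMap_eq]
      linear_combination -hX1
  have hℓ : Ideal.span {ℓ} ≤ Q := (Ideal.span_singleton_le_iff_mem Q).mpr hℓQ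
  obtain ⟨f, hfQ, hfℓ⟩ := SetLike.not_le_iff_exists.mp hQℓ
  have hψf : ψ f ∈ Q := by simpa using sub_mem hfQ (hℓ (hψ f))
  set g := aeval ![Polynomial.C (-b) * Polynomial.X, Polynomial.C a * Polynomial.X] f
  have hmQ : m ∈ Q := by
    refine mem_of_aeval_mem_of_isHomogeneous (g := g) hQ hQh ?_
      (Nat.pos_of_ne_zero fun h0 ↦ hfℓ ?_) hψf
    · exact ((isHomogeneous_X k 0).C_mul x).add ((isHomogeneous_X k 1).C_mul y)
    have hψg : ψ f = C (g.coeff 0) := by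
      change Polynomial.aeval m g = _
      conv_lhs => rw [Polynomial.eq_C_of_natDegree_eq_zero h0]
      rw [Polynomial.aeval_C, algebraMap_eq]
    simpa [hψg, eq_zero_of_C_mem hQ.ne_top (hψg ▸ hψf)] using hψ f
  rw [Ideal.span_le, Set.insert_subset_iff, Set.singleton_subset_iff, SetLike.mem_coe,
    SetLike.mem_coe, hX0, hX1]
  exact ⟨sub_mem (Q.mul_mem_left _ hℓQ) (Q.mul_mem_left _ hmQ),
    sub_mem (Q.mul_mem_left _ hmQ) (Q.mul_mem_left _ hℓQ)⟩

theorem eq_bot_or_eq_span_linear_or_eq_span_X [IsAlgClosed k] {Q : Ideal (MvPolynomial (Fin 2) k)}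
    (hQ : Q.IsPrime) (hQh : Q.IsHomogeneous (homogeneousSubmodule (Fin 2) k)) :
    Q = ⊥ ∨ (∃ a b : k, ¬(a = 0 ∧ b = 0) ∧ Q = Ideal.span {C a * X 0 + C b * X 1}) ∨
      Q = Ideal.span {X 0, X 1} := by
  by_cases hbot : Q = ⊥
  · exact Or.inl hbot
  obtain ⟨f, hfQ, hf0⟩ := Submodule.exists_mem_ne_zero_of_ne_bot hbot
  obtain ⟨n, hn⟩ : ∃ n, homogeneousComponent n f ≠ 0 := by
    by_contra! h
    exact hf0 (by rw [← sum_homogeneousComponent f]; simp [h])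
  obtain ⟨a, b, hab, hℓQ⟩ := exists_linear_mem_of_isHomogeneous_mem hQ
    (homogeneousComponent_isHomogeneous n f) hn (homogeneousComponent_mem_of_mem hQh hfQ n)
  by_cases hQℓ : Q ≤ Ideal.span {C a * X 0 + C b * X 1}
  · exact Or.inr (Or.inl ⟨a, b, hab, le_antisymm hQℓ ((Ideal.span_singleton_le_iff_mem Q).mpr hℓQ)⟩)
  have hvars : Ideal.span {X 0, X 1} = idealOfVars (Fin 2) k := by
    congr 1
    ext p
    simp [Fin.exists_fin_two, eq_comm]
  refine Or.inr (Or.inr (hvars ▸ (isMaximal_idealOfVars.eq_of_le hQ.ne_top ?_).symm))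
  exact hvars ▸ span_X_le_of_linear_mem hQ hQh hab hℓQ hQℓ

end BinaryForms

attribute [local instance] gradedAlgebra weightedGradedAlgebra

theorem eq_ker_or_eq_ker_sup_span_of_isHomogeneous [IsAlgClosed k] {σ : Type*} {w : σ → ℕ}
    {g : σ → MvPolynomial (Fin 2) k} (hg : ∀ i, (g i).IsHomogeneous (w i))
    {ι : MvPolynomial (Fin 2) k →ₐ[k] MvPolynomial σ k} (hgι : ∀ p, aeval g (ι p) = p)
    {P : Ideal (MvPolynomial σ k)} (hP : P.IsPrime)
    (hPh : P.IsHomogeneous (weightedHomogeneousSubmodule k w)) (hker : RingHom.ker (aeval g) ≤ P) :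
    P = RingHom.ker (aeval g) ∨
      (∃ a b : k, ¬(a = 0 ∧ b = 0) ∧
        P = RingHom.ker (aeval g) ⊔ Ideal.span {C a * ι (X 0) + C b * ι (X 1)}) ∨
      P = RingHom.ker (aeval g) ⊔ Ideal.span {ι (X 0), ι (X 1)} := by
  have hsurj : Function.Surjective (aeval g) := fun p ↦ ⟨ι p, hgι p⟩
  have hQ : (P.map (aeval g)).IsPrime := Ideal.map_isPrime_of_surjective hsurj hker
  have hQh : (P.map (aeval g)).IsHomogeneous (homogeneousSubmodule (Fin 2) k) := by
    refine isHomogeneous_iff_weightedHomogeneousComponent_mem (w := 1).mpr fun q hq n ↦ ?_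
    obtain ⟨p, hp, rfl⟩ := (Ideal.mem_map_iff_of_surjective _ hsurj).mp hq
    rw [← aeval_weightedHomogeneousComponent hg]
    exact Ideal.mem_map_of_mem _
      (isHomogeneous_iff_weightedHomogeneousComponent_mem.mp hPh p hp n)
  have hpull {S : Set (MvPolynomial (Fin 2) k)} (hS : P.map (aeval g) = Ideal.span S) :
      P = RingHom.ker (aeval g) ⊔ Ideal.span (ι '' S) :=
    Ideal.eq_sup_span_image_of_map_eq_span (φ := (aeval g : _ →ₐ[k] _).toRingHom)
      (ι := ι.toRingHom) hgι hker hS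
  rcases eq_bot_or_eq_span_linear_or_eq_span_X hQ hQh with h | ⟨a, b, hab, h⟩ | h
  · exact Or.inl (by simpa using hpull (S := ∅) (by simpa using h))
  · exact Or.inr (Or.inl ⟨a, b, hab, by simpa using hpull h⟩)
  · exact Or.inr (Or.inr (by simpa [Set.image_pair] using hpull h))

end MvPolynomial

section BidegreeTwoOne

variable {k : Type*} [Field k]

attribute [local instance] weightedGradedAlgebra

theorem biDeg_le_weightedHomogeneousSubmodule_st (m n : ℕ) :
    biDeg k m n ≤ weightedHomogeneousSubmodule k ![1, 1, 0, 0] m := fun p hp d hd ↦ by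
  simpa [Finsupp.weight_apply, Finsupp.sum_fintype, Fin.sum_univ_four] using
    (hp d (mem_support_iff.mpr hd)).1

theorem biDeg_le_weightedHomogeneousSubmodule_uv (m n : ℕ) :
    biDeg k m n ≤ weightedHomogeneousSubmodule k ![0, 0, 1, 1] n := fun p hp d hd ↦ by
  simpa [Finsupp.weight_apply, Finsupp.sum_fintype, Fin.sum_univ_four] using
    (hp d (mem_support_iff.mpr hd)).2

theorem eq_of_span_X01_le [IsAlgClosed k] {P : Ideal (MvPolynomial (Fin 4) k)} (hP : P.IsPrime)
    (hPh : P.IsHomogeneous (weightedHomogeneousSubmodule k ![0, 0, 1, 1]))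
    (h : Ideal.span {X 0, X 1} ≤ P) :
    P = Ideal.span {X 0, X 1} ∨
      (∃ a b : k, ¬(a = 0 ∧ b = 0) ∧ P = Ideal.span {X 0, X 1, C a * X 2 + C b * X 3}) ∨
      P = Ideal.span {X 0, X 1, X 2, X 3} := by
  set g : Fin 4 → MvPolynomial (Fin 2) k := ![0, 0, X 0, X 1]
  set ι : MvPolynomial (Fin 2) k →ₐ[k] MvPolynomial (Fin 4) k := aeval ![X 2, X 3]
  have hgι : ∀ p, aeval g (ι p) = p := fun p ↦ DFunLike.congr_fun
    (algHom_ext fun i ↦ by fin_cases i <;> simp [g, ι] : (aeval g).comp ι = AlgHom.id k _) p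
  have hker : RingHom.ker (aeval g) = Ideal.span {X 0, X 1} :=
    ker_aeval_eq_of_forall_X_sub_mem (ι := ι) (by simp [Ideal.span_le, Set.insert_subset_iff, g])
      fun i ↦ by fin_cases i <;> simp [g, ι] <;> exact Ideal.subset_span (by simp)
  have hg : ∀ i, (g i).IsHomogeneous (![0, 0, 1, 1] i) := fun i ↦ by
    fin_cases i <;> simp [g, isHomogeneous_zero, isHomogeneous_X]
  rcases eq_ker_or_eq_ker_sup_span_of_isHomogeneous hg hgι hP hPh (hker ▸ h)
    with h | ⟨a, b, hab, h⟩ | h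
  · exact Or.inl (h.trans hker)
  · refine Or.inr (Or.inl ⟨a, b, hab, ?_⟩)
    rw [h, hker, ← Ideal.span_union]
    simp only [ι, aeval_X, Matrix.cons_val_zero, Matrix.cons_val_one,
      Set.insert_union, Set.singleton_union]
  · refine Or.inr (Or.inr ?_)
    rw [h, hker, ← Ideal.span_union]
    simp only [ι, aeval_X, Matrix.cons_val_zero, Matrix.cons_val_one,
      Set.insert_union, Set.singleton_union]

theorem eq_of_span_X23_le [IsAlgClosed k] {P : Ideal (MvPolynomial (Fin 4) k)} (hP : P.IsPrime)
    (hPh : P.IsHomogeneous (weightedHomogeneousSubmodule k ![1, 1, 0, 0]))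
    (h : Ideal.span {X 2, X 3} ≤ P) :
    P = Ideal.span {X 2, X 3} ∨
      (∃ a b : k, ¬(a = 0 ∧ b = 0) ∧ P = Ideal.span {X 2, X 3, C a * X 0 + C b * X 1}) ∨
      P = Ideal.span {X 0, X 1, X 2, X 3} := by
  set g : Fin 4 → MvPolynomial (Fin 2) k := ![X 0, X 1, 0, 0]
  set ι : MvPolynomial (Fin 2) k →ₐ[k] MvPolynomial (Fin 4) k := aeval ![X 0, X 1]
  have hgι : ∀ p, aeval g (ι p) = p := fun p ↦ DFunLike.congr_fun
    (algHom_ext fun i ↦ by fin_cases i <;> simp [g, ι] : (aeval g).comp ι = AlgHom.id k _) p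
  have hker : RingHom.ker (aeval g) = Ideal.span {X 2, X 3} :=
    ker_aeval_eq_of_forall_X_sub_mem (ι := ι) (by simp [Ideal.span_le, Set.insert_subset_iff, g])
      fun i ↦ by fin_cases i <;> simp [g, ι] <;> exact Ideal.subset_span (by simp)
  have hg : ∀ i, (g i).IsHomogeneous (![1, 1, 0, 0] i) := fun i ↦ by
    fin_cases i <;> simp [g, isHomogeneous_zero, isHomogeneous_X]
  rcases eq_ker_or_eq_ker_sup_span_of_isHomogeneous hg hgι hP hPh (hker ▸ h)
    with h | ⟨a, b, hab, h⟩ | h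
  · exact Or.inl (h.trans hker)
  · refine Or.inr (Or.inl ⟨a, b, hab, ?_⟩)
    rw [h, hker, ← Ideal.span_union]
    simp only [ι, aeval_X, Matrix.cons_val_zero, Matrix.cons_val_one,
      Set.insert_union, Set.singleton_union]
  · refine Or.inr (Or.inr ?_)
    rw [h, hker, sup_comm, ← Ideal.span_union]
    simp only [ι, aeval_X, Matrix.cons_val_zero, Matrix.cons_val_one,
      Set.insert_union, Set.singleton_union]

end BidegreeTwoOne

theorem statement7_general {k : Type*} [Field k] [IsAlgClosed k]
    (U : Submodule k (MvPolynomial (Fin 4) k))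
    (hU : U ≤ biDeg k 2 1)
    (hbpf : (Ideal.span (U : Set (MvPolynomial (Fin 4) k))).radical =
      Ideal.span {X 0, X 1} ⊓ Ideal.span {X 2, X 3}) :
    ∀ P ∈ associatedPrimes (MvPolynomial (Fin 4) k)
        (MvPolynomial (Fin 4) k ⧸ Ideal.span (U : Set (MvPolynomial (Fin 4) k))),
      P = Ideal.span {X 0, X 1} ∨ P = Ideal.span {X 2, X 3} ∨
      (∃ a b : k, ¬ (a = 0 ∧ b = 0) ∧ P = Ideal.span {X 0, X 1, C a * X 2 + C b * X 3}) ∨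
      (∃ a b : k, ¬ (a = 0 ∧ b = 0) ∧ P = Ideal.span {X 2, X 3, C a * X 0 + C b * X 1}) ∨
      P = Ideal.span {X 0, X 1, X 2, X 3} := by
  intro P hP
  have hprime : P.IsPrime := hP.isPrime
  have hom {w : Fin 4 → ℕ} {n : ℕ} (hw : biDeg k 2 1 ≤ weightedHomogeneousSubmodule k w n) :=
    isHomogeneous_of_mem_associatedPrimes (isHomogeneous_span_of_le (hU.trans hw)) hP
  have hle : Ideal.span {X 0, X 1} ≤ P ∨ Ideal.span {X 2, X 3} ≤ P := by
    rw [← hprime.mul_le]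
    exact Ideal.mul_le_inf.trans
      (hbpf ▸ hprime.radical_le_iff.mpr (Ideal.le_of_mem_associatedPrimes_quotient hP))
  rcases hle with h | h
  · rcases eq_of_span_X01_le hprime (hom (biDeg_le_weightedHomogeneousSubmodule_uv 2 1)) h
      with h | h | h
    exacts [Or.inl h, Or.inr (Or.inr (Or.inl h)), Or.inr (Or.inr (Or.inr (Or.inr h)))]
  · rcases eq_of_span_X23_le hprime (hom (biDeg_le_weightedHomogeneousSubmodule_st 2 1)) h
      with h | h | h
    exacts [Or.inr (Or.inl h), Or.inr (Or.inr (Or.inr (Or.inl h))),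
      Or.inr (Or.inr (Or.inr (Or.inr h)))]

/-- If U is basepoint free, every associated prime of R/I_U is one of
⟨s,t⟩, ⟨u,v⟩, ⟨s,t,au+bv⟩, ⟨u,v,as+bt⟩ (with (a,b) ≠ (0,0)), or ⟨s,t,u,v⟩. -/
theorem statement7 {k : Type*} [Field k] [IsAlgClosed k]
    (U : Submodule k (MvPolynomial (Fin 4) k))
    (hU : U ≤ biDeg k 2 1)
    (hdim : Module.finrank k ↥U = 4)
    (hbpf : (Ideal.span (U : Set (MvPolynomial (Fin 4) k))).radical =
      Ideal.span {X 0, X 1} ⊓ Ideal.span {X 2, X 3}) :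
    ∀ P ∈ associatedPrimes (MvPolynomial (Fin 4) k)
        (MvPolynomial (Fin 4) k ⧸ Ideal.span (U : Set (MvPolynomial (Fin 4) k))),
      P = Ideal.span {X 0, X 1} ∨ P = Ideal.span {X 2, X 3} ∨
      (∃ a b : k, ¬ (a = 0 ∧ b = 0) ∧ P = Ideal.span {X 0, X 1, C a * X 2 + C b * X 3}) ∨
      (∃ a b : k, ¬ (a = 0 ∧ b = 0) ∧ P = Ideal.span {X 2, X 3, C a * X 0 + C b * X 1}) ∨
      P = Ideal.span {X 0, X 1, X 2, X 3} :=
  statement7_general U hU hbpf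
end
end

section
/- Let x_0,…,x_5 ∈ k and set f = x_0s²u + x_1stu + x_2t²u + x_3s²v + x_4stv + x_5t²v ∈ R_{(2,1)}. Then f factors as f = q·l for some bihomogeneous q of bidegree (1,1) and some bihomogeneous l of bidegree (1,0) if and only if x_2²x_3² − x_1x_2x_3x_4 + x_0x_2x_4² + x_1²x_3x_5 − 2x_0x_2x_3x_5 − x_0x_1x_4x_5 + x_0²x_5² = 0. -/
/-!
Write `f = u F(s,t) + v G(s,t)`. A factorization `f = q l` with `l = b₀s + b₁t` is the same as
`F` and `G` sharing the factor `l`, a condition on coefficients under which the resultant of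
`F` and `G` vanishes identically. Conversely, over an algebraically closed field a vanishing
resultant gives a common root `α` of `F` and `G`, and `s - α t` is a common factor.
-/

open MvPolynomial

noncomputable section

section BiDeg

open Finsupp

variable (k : Type*) [CommRing k]

lemma setOf_biDeg_one_zero_eq_range :
    {d : Fin 4 →₀ ℕ | d 0 + d 1 = 1 ∧ d 2 + d 3 = 0} = Set.range ![single 0 1, single 1 1] := by
  ext d
  simp [Finsupp.ext_iff, Fin.forall_fin_succ, single_apply, eq_comm]
  omega

lemma setOf_biDeg_one_one_eq_range :
    {d : Fin 4 →₀ ℕ | d 0 + d 1 = 1 ∧ d 2 + d 3 = 1} = Set.range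
      ![single 0 1 + single 2 1, single 0 1 + single 3 1,
        single 1 1 + single 2 1, single 1 1 + single 3 1] := by
  ext d
  simp [Finsupp.ext_iff, Fin.forall_fin_succ, single_apply, eq_comm]
  omega

lemma biDeg_eq_restrictSupport (m n : ℕ) :
    biDeg k m n = restrictSupport k {d | d 0 + d 1 = m ∧ d 2 + d 3 = n} := rfl

lemma biDeg_one_zero_eq_span : biDeg k 1 0 = Submodule.span k (Set.range ![X 0, X 1]) := by
  rw [biDeg_eq_restrictSupport, restrictSupport_eq_span, setOf_biDeg_one_zero_eq_range,
    ← Set.range_comp]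
  congr 2
  ext i : 1
  fin_cases i <;> rfl

lemma biDeg_one_one_eq_span :
    biDeg k 1 1 = Submodule.span k (Set.range ![X 0 * X 2, X 0 * X 3, X 1 * X 2, X 1 * X 3]) := by
  rw [biDeg_eq_restrictSupport, restrictSupport_eq_span, setOf_biDeg_one_one_eq_range,
    ← Set.range_comp]
  congr 2
  ext i : 1
  fin_cases i <;> simp [X, monomial_mul]

variable {k}

lemma mem_biDeg_one_zero_iff {l : MvPolynomial (Fin 4) k} :
    l ∈ biDeg k 1 0 ↔ ∃ b₀ b₁ : k, l = C b₀ * X 0 + C b₁ * X 1 := by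
  rw [biDeg_one_zero_eq_span, Submodule.mem_span_range_iff_exists_fun]
  simp [Fin.exists_fin_succ_pi, smul_eq_C_mul, eq_comm]

lemma mem_biDeg_one_one_iff {q : MvPolynomial (Fin 4) k} :
    q ∈ biDeg k 1 1 ↔ ∃ a₀ a₁ a₂ a₃ : k, q = C a₀ * (X 0 * X 2) + C a₁ * (X 0 * X 3) +
      C a₂ * (X 1 * X 2) + C a₃ * (X 1 * X 3) := by
  rw [biDeg_one_one_eq_span, Submodule.mem_span_range_iff_exists_fun]
  simp [Fin.exists_fin_succ_pi, Fin.sum_univ_succ, smul_eq_C_mul, eq_comm, add_assoc]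

end BiDeg

section Factorization

variable {k : Type*} [CommRing k]

/-- The form `u F(s,t) + v G(s,t)` with `F = x₀s² + x₁st + x₂t²` and `G = x₃s² + x₄st + x₅t²`. -/
def form21 (x₀ x₁ x₂ x₃ x₄ x₅ : k) : MvPolynomial (Fin 4) k :=
  C x₀ * (X 0 ^ 2 * X 2) + C x₁ * (X 0 * X 1 * X 2) + C x₂ * (X 1 ^ 2 * X 2) +
    C x₃ * (X 0 ^ 2 * X 3) + C x₄ * (X 0 * X 1 * X 3) + C x₅ * (X 1 ^ 2 * X 3)

lemma form21_inj {x₀ x₁ x₂ x₃ x₄ x₅ y₀ y₁ y₂ y₃ y₄ y₅ : k}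
    (h : form21 x₀ x₁ x₂ x₃ x₄ x₅ = form21 y₀ y₁ y₂ y₃ y₄ y₅) :
    x₀ = y₀ ∧ x₁ = y₁ ∧ x₂ = y₂ ∧ x₃ = y₃ ∧ x₄ = y₄ ∧ x₅ = y₅ := by
  have e := fun p : Fin 4 → k => congrArg (eval p) h
  have e₀ := e ![1, 0, 1, 0]
  have e₂ := e ![0, 1, 1, 0]
  have e₃ := e ![1, 0, 0, 1]
  have e₅ := e ![0, 1, 0, 1]
  have e₁ := e ![1, 1, 1, 0]
  have e₄ := e ![1, 1, 0, 1]
  simp [form21] at e₀ e₁ e₂ e₃ e₄ e₅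
  refine ⟨e₀, ?_, e₂, e₃, ?_, e₅⟩
  · linear_combination e₁ - e₀ - e₂
  · linear_combination e₄ - e₃ - e₅

lemma biDeg_one_one_mul_biDeg_one_zero (a₀ a₁ a₂ a₃ b₀ b₁ : k) :
    (C a₀ * (X 0 * X 2) + C a₁ * (X 0 * X 3) + C a₂ * (X 1 * X 2) + C a₃ * (X 1 * X 3)) *
      (C b₀ * X 0 + C b₁ * X 1) =
    form21 (a₀ * b₀) (a₀ * b₁ + a₂ * b₀) (a₂ * b₁) (a₁ * b₀) (a₁ * b₁ + a₃ * b₀) (a₃ * b₁) := by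
  simp only [form21, C_mul, C_add]
  ring

/-- `F = (a₀s + a₂t)(b₀s + b₁t)` and `G = (a₁s + a₃t)(b₀s + b₁t)`. -/
def HasCommonLinearFactor (x₀ x₁ x₂ x₃ x₄ x₅ : k) : Prop :=
  ∃ a₀ a₁ a₂ a₃ b₀ b₁ : k, x₀ = a₀ * b₀ ∧ x₁ = a₀ * b₁ + a₂ * b₀ ∧ x₂ = a₂ * b₁ ∧
    x₃ = a₁ * b₀ ∧ x₄ = a₁ * b₁ + a₃ * b₀ ∧ x₅ = a₃ * b₁

lemma exists_biDeg_factorization_iff (x₀ x₁ x₂ x₃ x₄ x₅ : k) :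
    (∃ q l : MvPolynomial (Fin 4) k, q ∈ biDeg k 1 1 ∧ l ∈ biDeg k 1 0 ∧
      form21 x₀ x₁ x₂ x₃ x₄ x₅ = q * l) ↔ HasCommonLinearFactor x₀ x₁ x₂ x₃ x₄ x₅ := by
  constructor
  · rintro ⟨q, l, hq, hl, h⟩
    obtain ⟨a₀, a₁, a₂, a₃, rfl⟩ := mem_biDeg_one_one_iff.mp hq
    obtain ⟨b₀, b₁, rfl⟩ := mem_biDeg_one_zero_iff.mp hl
    rw [biDeg_one_one_mul_biDeg_one_zero] at h
    exact ⟨a₀, a₁, a₂, a₃, b₀, b₁, form21_inj h⟩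
  · rintro ⟨a₀, a₁, a₂, a₃, b₀, b₁, rfl, rfl, rfl, rfl, rfl, rfl⟩
    exact ⟨_, _, mem_biDeg_one_one_iff.mpr ⟨a₀, a₁, a₂, a₃, rfl⟩,
      mem_biDeg_one_zero_iff.mpr ⟨b₀, b₁, rfl⟩, (biDeg_one_one_mul_biDeg_one_zero ..).symm⟩

end Factorization

section Resultant

variable {k : Type*}

/-- Bézout form of the resultant of `x₀s² + x₁st + x₂t²` and `x₃s² + x₄st + x₅t²`. -/
def quadResultant [CommRing k] (x₀ x₁ x₂ x₃ x₄ x₅ : k) : k :=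
  (x₀ * x₅ - x₂ * x₃) ^ 2 - (x₀ * x₄ - x₁ * x₃) * (x₁ * x₅ - x₂ * x₄)

lemma quadResultant_swap [CommRing k] (x₀ x₁ x₂ x₃ x₄ x₅ : k) :
    quadResultant x₃ x₄ x₅ x₀ x₁ x₂ = quadResultant x₀ x₁ x₂ x₃ x₄ x₅ := by
  unfold quadResultant
  ring

namespace HasCommonLinearFactor

variable [CommRing k] {x₀ x₁ x₂ x₃ x₄ x₅ : k}

lemma quadResultant_eq_zero (h : HasCommonLinearFactor x₀ x₁ x₂ x₃ x₄ x₅) :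
    quadResultant x₀ x₁ x₂ x₃ x₄ x₅ = 0 := by
  obtain ⟨a₀, a₁, a₂, a₃, b₀, b₁, rfl, rfl, rfl, rfl, rfl, rfl⟩ := h
  unfold quadResultant
  ring

lemma of_common_root (α : k) (hF : x₀ * α ^ 2 + x₁ * α + x₂ = 0)
    (hG : x₃ * α ^ 2 + x₄ * α + x₅ = 0) : HasCommonLinearFactor x₀ x₁ x₂ x₃ x₄ x₅ :=
  ⟨x₀, x₃, x₁ + x₀ * α, x₄ + x₃ * α, 1, -α, by ring, by ring, by linear_combination hF,
    by ring, by ring, by linear_combination hG⟩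

end HasCommonLinearFactor

variable [Field k]

lemma exists_common_root_of_quadResultant_eq_zero [IsAlgClosed k] {x₀ x₁ x₂ x₃ x₄ x₅ : k}
    (hx₀ : x₀ ≠ 0) (h : quadResultant x₀ x₁ x₂ x₃ x₄ x₅ = 0) :
    ∃ α : k, x₀ * α ^ 2 + x₁ * α + x₂ = 0 ∧ x₃ * α ^ 2 + x₄ * α + x₅ = 0 := by
  obtain ⟨α, hα⟩ := IsAlgClosed.exists_root
    (Polynomial.C x₀ * Polynomial.X ^ 2 + Polynomial.C x₁ * Polynomial.X + Polynomial.C x₂)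
    (by rw [Polynomial.degree_quadratic hx₀]; decide)
  have hFα : x₀ * α ^ 2 + x₁ * α + x₂ = 0 := by simpa using hα
  -- `γ` is the other root of `F`, and the resultant is `x₀² G(α) G(γ)`.
  set γ := -(x₁ + x₀ * α) / x₀ with hγ
  have hFγ : x₀ * γ ^ 2 + x₁ * γ + x₂ = 0 := by
    rw [hγ]
    field_simp
    linear_combination x₀ * hFα
  have hres : (x₃ * α ^ 2 + x₄ * α + x₅) * (x₀ ^ 2 * (x₃ * γ ^ 2 + x₄ * γ + x₅)) = 0 := by
    unfold quadResultant at h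
    rw [hγ]
    field_simp
    linear_combination h - (x₃ ^ 2 * (x₂ - x₁ * α - x₀ * α ^ 2) - x₁ * x₃ * x₄ + x₀ * x₄ ^ 2 -
      2 * x₀ * x₃ * x₅) * hFα
  rcases mul_eq_zero.mp hres with hGα | hGγ
  · exact ⟨α, hFα, hGα⟩
  · exact ⟨γ, hFγ, (mul_eq_zero.mp hGγ).resolve_left (pow_ne_zero 2 hx₀)⟩

lemma hasCommonLinearFactor_iff_quadResultant_eq_zero [IsAlgClosed k] (x₀ x₁ x₂ x₃ x₄ x₅ : k) :
    HasCommonLinearFactor x₀ x₁ x₂ x₃ x₄ x₅ ↔ quadResultant x₀ x₁ x₂ x₃ x₄ x₅ = 0 := by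
  refine ⟨HasCommonLinearFactor.quadResultant_eq_zero, fun h => ?_⟩
  by_cases hx₀ : x₀ = 0
  · by_cases hx₃ : x₃ = 0
    · subst hx₀ hx₃
      exact ⟨x₁, x₄, x₂, x₅, 0, 1, by ring, by ring, by ring, by ring, by ring, by ring⟩
    · rw [← quadResultant_swap] at h
      obtain ⟨α, hG, hF⟩ := exists_common_root_of_quadResultant_eq_zero hx₃ h
      exact HasCommonLinearFactor.of_common_root α hF hG
  · obtain ⟨α, hF, hG⟩ := exists_common_root_of_quadResultant_eq_zero hx₀ h
    exact HasCommonLinearFactor.of_common_root α hF hG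

end Resultant

/-- f = x₀s²u + x₁stu + x₂t²u + x₃s²v + x₄stv + x₅t²v factors as a
product of a bidegree (1,1) form and a bidegree (1,0) form iff
x₂²x₃² − x₁x₂x₃x₄ + x₀x₂x₄² + x₁²x₃x₅ − 2x₀x₂x₃x₅ − x₀x₁x₄x₅ + x₀²x₅² = 0. -/
theorem statement18 {k : Type*} [Field k] [IsAlgClosed k]
    (x₀ x₁ x₂ x₃ x₄ x₅ : k) :
    (∃ q l : MvPolynomial (Fin 4) k, q ∈ biDeg k 1 1 ∧ l ∈ biDeg k 1 0 ∧
      C x₀ * (X 0 ^ 2 * X 2) + C x₁ * (X 0 * X 1 * X 2) + C x₂ * (X 1 ^ 2 * X 2) +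
        C x₃ * (X 0 ^ 2 * X 3) + C x₄ * (X 0 * X 1 * X 3) + C x₅ * (X 1 ^ 2 * X 3) =
      q * l) ↔
    x₂ ^ 2 * x₃ ^ 2 - x₁ * x₂ * x₃ * x₄ + x₀ * x₂ * x₄ ^ 2 + x₁ ^ 2 * x₃ * x₅ -
      2 * x₀ * x₂ * x₃ * x₅ - x₀ * x₁ * x₄ * x₅ + x₀ ^ 2 * x₅ ^ 2 = 0 := by
  have hres : x₂ ^ 2 * x₃ ^ 2 - x₁ * x₂ * x₃ * x₄ + x₀ * x₂ * x₄ ^ 2 + x₁ ^ 2 * x₃ * x₅ -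
      2 * x₀ * x₂ * x₃ * x₅ - x₀ * x₁ * x₄ * x₅ + x₀ ^ 2 * x₅ ^ 2 =
      quadResultant x₀ x₁ x₂ x₃ x₄ x₅ := by
    unfold quadResultant
    ring
  rw [hres, ← hasCommonLinearFactor_iff_quadResultant_eq_zero]
  exact exists_biDeg_factorization_iff x₀ x₁ x₂ x₃ x₄ x₅
end
end
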